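/- arXiv:1712.04506 — 3 statements merged into one kernel-verified Lean document; each statement's English description precedes it below -/
import Mathlib

section
/- Let (m_d, 𝒪) be the unique realization of a q-cycle σ ∈ 𝒞_q with d = des(σ) ≥ 2 and sig(σ) = (a₁,…,a_q) where a_q = 1. Then each of the d − 1 marked intervals of 𝒪 contains exactly one fixed point of m_d; more precisely, if i₁ < ⋯ < i_{d−1} = q are the indices i with aᵢ = 1, then the marked interval I_{i_j} = [x_{i_j}, x_{i_j + 1}] contains the fixed point j/(d−1) of m_d. -/
open scoped Classical

noncomputable section

/-- The representative of `i : ZMod q` in `{1, …, q}`. -/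
def rep (q : ℕ) [NeZero q] (i : ZMod q) : ℕ :=
  if i = 0 then q else i.val

/-- The rotation `ρ : i ↦ i + 1 (mod q)` of `ZMod q`. -/
def rotPerm (q : ℕ) : Equiv.Perm (ZMod q) :=
  Equiv.addRight 1

/-- The descent number `des σ`: the number of `i ∈ ZMod q` with `σ(i) > σ(i+1)`,
values compared via their representatives in `{1, …, q}`. -/
def desNum (q : ℕ) [NeZero q] (σ : Equiv.Perm (ZMod q)) : ℕ :=
  (Finset.univ.filter fun i : ZMod q => rep q (σ (i + 1)) < rep q (σ i)).card

/-- `σ` is a `q`-cycle, i.e. it acts transitively on `ZMod q`. -/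
def IsQCycle (q : ℕ) (σ : Equiv.Perm (ZMod q)) : Prop :=
  ∀ i j : ZMod q, ∃ n : ℕ, (σ ^ n) i = j

/-- The transition matrix of `σ`: the `(i,j)` entry is `1` if `j` lies in the
cyclic interval `[σ(i), σ(i+1))` of `ZMod q` and `0` otherwise. -/
def transMatrix (q : ℕ) [NeZero q] (σ : Equiv.Perm (ZMod q)) :
    Matrix (ZMod q) (ZMod q) ℝ :=
  Matrix.of fun i j => if (j - σ i).val < (σ (i + 1) - σ i).val then (1 : ℝ) else 0

/-- A probability vector: non-negative components summing to `1`. -/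
def IsProbVec (q : ℕ) [NeZero q] (v : ZMod q → ℝ) : Prop :=
  (∀ i, 0 ≤ v i) ∧ ∑ i, v i = 1

/-- The symmetry order of `σ`: the order of the stabilizer of `σ` in the rotation
group `⟨ρ⟩` acting by conjugation. -/
def symOrder (q : ℕ) [NeZero q] (σ : Equiv.Perm (ZMod q)) : ℕ :=
  ((Finset.range q).filter fun j => rotPerm q ^ j * σ * (rotPerm q ^ j)⁻¹ = σ).card

/-- `F : ℝ → ℝ` is a lift of a degree `k` covering map of `ℝ/ℤ`:
a homeomorphism of `ℝ` with `F (t+1) = F t + k`. -/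
def IsDegreeLift (k : ℕ) (F : ℝ → ℝ) : Prop :=
  Continuous F ∧ StrictMono F ∧ ∀ t, F (t + 1) = F t + k

/-- The fixed point of the circle map corresponding to `u` (a point with
`F u - u ∈ ℤ`) is topologically repelling: `t ↦ F t - t` is strictly increasing
in a neighborhood of `u`. -/
def TopRepelling (F : ℝ → ℝ) (u : ℝ) : Prop :=
  ∃ ε > 0, StrictMonoOn (fun t => F t - t) (Set.Ioo (u - ε) (u + ε))

/-- `x : ZMod q → ℝ` is a period `q` orbit realizing `σ` for the circle map with
lift `F`: the points `x i` lie in `(0,1)` and are increasing with respect to the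
representatives `{1, …, q}` (so that `0, x₁, …, x_q` are in positive cyclic
order), and on the circle `f(x i) = x (σ i)` for all `i`. -/
def IsRealization (q : ℕ) [NeZero q] (σ : Equiv.Perm (ZMod q))
    (F : ℝ → ℝ) (x : ZMod q → ℝ) : Prop :=
  (∀ i, x i ∈ Set.Ioo (0 : ℝ) 1) ∧
  (∀ i j : ZMod q, rep q i < rep q j → x i < x j) ∧
  (∀ i, ∃ m : ℤ, F (x i) = x (σ i) + m)

/-- A realization of `σ` under the multiplication map `m_k : x ↦ kx (mod ℤ)`. -/
def MkRealization (q k : ℕ) [NeZero q] (σ : Equiv.Perm (ZMod q)) (x : ZMod q → ℝ) : Prop :=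
  IsRealization q σ (fun t => (k : ℝ) * t) x

/-- The upper endpoint (as a real number) of the partition interval
`I i = [x i, x (i+1)]`; for `i = 0 ≡ q` the interval wraps around `0 ∈ ℝ/ℤ`
and the endpoint is `x 1 + 1`. -/
def upperPt (q : ℕ) [NeZero q] (x : ZMod q → ℝ) (i : ZMod q) : ℝ :=
  if i = 0 then x 1 + 1 else x (i + 1)

/-- The `i`-th component of the fixed point distribution: the number of fixed
points of `m_k` (the points `j/(k-1) (mod ℤ)`) in the interior of the partition
interval `I i`. -/
def fixDist (q k : ℕ) [NeZero q] (x : ZMod q → ℝ) (i : ZMod q) : ℕ :=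
  ((Finset.Icc 1 (2 * (k - 1))).filter fun j : ℕ =>
    x i < (j : ℝ) / ((k : ℝ) - 1) ∧ (j : ℝ) / ((k : ℝ) - 1) < upperPt q x i).card

/-- The number of fixed points of `m_k` in the interval `(0, x 1)`. -/
def countFixBelow (q k : ℕ) [NeZero q] (x : ZMod q → ℝ) : ℕ :=
  ((Finset.range (k - 1)).filter fun j : ℕ =>
    0 < j ∧ (j : ℝ) / ((k : ℝ) - 1) < x 1).card

/-- The `m`-th component of the (cumulative) deployment vector: the number of
orbit points in `(0, m/(k-1))`. -/
def depCount (q k : ℕ) [NeZero q] (x : ZMod q → ℝ) (m : ℕ) : ℕ :=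
  (Finset.univ.filter fun j : ZMod q => x j < (m : ℝ) / ((k : ℝ) - 1)).card

/-- The rank of a marked index `i` among the marked indices `i₁ < ⋯ < i_{d-1}`
(ordered by their representatives in `{1, …, q}`). -/
def markRank (q : ℕ) [NeZero q] (σ : Equiv.Perm (ZMod q)) (i : ZMod q) : ℕ :=
  (Finset.univ.filter fun i' : ZMod q =>
    transMatrix q σ i' i' = 1 ∧ rep q i' ≤ rep q i).card

section AuxLemmas

variable (q : ℕ) [NeZero q]

theorem subval (a b : ZMod q) : ∃ k, (b - a).val + a.val = b.val + q * k := by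
  have h := ZMod.val_add (b - a) a
  rw [sub_add_cancel] at h
  have h2 := Nat.mod_add_div ((b - a).val + a.val) q
  exact ⟨((b - a).val + a.val) / q, by omega⟩

theorem subval' (a b : ZMod q) :
    (b - a).val + a.val = b.val ∨ (b - a).val + a.val = b.val + q := by
  obtain ⟨k, e⟩ := subval q a b
  have b1 := (b - a).val_lt
  have b2 := a.val_lt
  have b3 := b.val_lt
  match k with
  | 0 => left; omega
  | 1 => right; omega
  | (n + 2) =>
    exfalso
    have : q * 2 ≤ q * (n + 2) := Nat.mul_le_mul_left q (by omega)
    omega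

theorem rep_cases (a : ZMod q) :
    (rep q a = a.val ∧ a.val ≠ 0) ∨ (rep q a = q ∧ a.val = 0) := by
  by_cases h : a = 0
  · right; subst h; simp [rep]
  · left; rw [rep, if_neg h]
    exact ⟨rfl, fun hv => h ((ZMod.val_eq_zero a).mp hv)⟩

theorem rep_inj {a b : ZMod q} (h : rep q a = rep q b) : a = b := by
  have ha := a.val_lt; have hb := b.val_lt
  rcases rep_cases q a with ⟨h1, h2⟩ | ⟨h1, h2⟩ <;>
    rcases rep_cases q b with ⟨h3, h4⟩ | ⟨h3, h4⟩
  · exact ZMod.val_injective _ (by omega)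
  · omega
  · omega
  · exact ZMod.val_injective _ (by omega)

theorem val_succ (hq : 2 ≤ q) (a : ZMod q) :
    (a + 1).val = a.val + 1 ∨ (a.val = q - 1 ∧ (a + 1).val = 0) := by
  haveI : Fact (1 < q) := ⟨hq⟩
  have h := ZMod.val_add a 1
  rw [ZMod.val_one] at h
  have ha := a.val_lt
  by_cases hc : a.val + 1 = q
  · right; rw [h, hc, Nat.mod_self]; omega
  · left; rw [h, Nat.mod_eq_of_lt (by omega)]

theorem vne_of_ne {a b : ZMod q} (h : a ≠ b) : a.val ≠ b.val :=
  fun hv => h (ZMod.val_injective _ hv)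

theorem valsub_ne {a b : ZMod q} (h : a ≠ b) : (a - b).val ≠ 0 := by
  intro hv
  exact h (sub_eq_zero.mp ((ZMod.val_eq_zero _).mp hv))

theorem lemB1 (hq : 2 ≤ q) (i p r : ZMod q) (hi : i ≠ 0) (hp : p ≠ i)
    (hr : r ≠ i + 1) (hpr : p ≠ r) (hA : (i - p).val < (r - p).val)
    (h1 : rep q i < rep q p) (h2 : rep q r < rep q (i + 1)) : False := by
  have e1 := subval' q p i
  have e2 := subval' q p r
  have e3 := val_succ q hq i
  have b1 := i.val_lt; have b2 := p.val_lt; have b3 := r.val_lt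
  have b4 := (i + 1).val_lt; have b5 := (i - p).val_lt; have b6 := (r - p).val_lt
  have n1 : i.val ≠ 0 := fun h => hi ((ZMod.val_eq_zero i).mp h)
  have n2 := vne_of_ne q hp
  have n3 := vne_of_ne q hr
  have n4 := valsub_ne q (show i ≠ p from fun h => hp h.symm)
  have n5 := valsub_ne q (show r ≠ p from fun h => hpr h.symm)
  rcases rep_cases q i with ⟨c1, c1'⟩ | ⟨c1, c1'⟩ <;>
    rcases rep_cases q p with ⟨c2, c2'⟩ | ⟨c2, c2'⟩ <;>
      rcases rep_cases q r with ⟨c3, c3'⟩ | ⟨c3, c3'⟩ <;>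
        rcases rep_cases q (i + 1) with ⟨c4, c4'⟩ | ⟨c4, c4'⟩ <;> omega

theorem lemB2 (hq : 2 ≤ q) (i p r : ZMod q) (hi : i ≠ 0) (hp : p ≠ i)
    (hr : r ≠ i + 1) (hpr : p ≠ r) (hA : (i - p).val < (r - p).val)
    (h1 : rep q i < rep q p) (h2 : rep q (i + 1) < rep q r) :
    rep q r < rep q p := by
  have e1 := subval' q p i
  have e2 := subval' q p r
  have e3 := val_succ q hq i
  have b1 := i.val_lt; have b2 := p.val_lt; have b3 := r.val_lt
  have b4 := (i + 1).val_lt; have b5 := (i - p).val_lt; have b6 := (r - p).val_lt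
  have n1 : i.val ≠ 0 := fun h => hi ((ZMod.val_eq_zero i).mp h)
  have n2 := vne_of_ne q hp
  have n3 := vne_of_ne q hr
  have n4 := valsub_ne q (show i ≠ p from fun h => hp h.symm)
  have n5 := valsub_ne q (show r ≠ p from fun h => hpr h.symm)
  rcases rep_cases q i with ⟨c1, c1'⟩ | ⟨c1, c1'⟩ <;>
    rcases rep_cases q p with ⟨c2, c2'⟩ | ⟨c2, c2'⟩ <;>
      rcases rep_cases q r with ⟨c3, c3'⟩ | ⟨c3, c3'⟩ <;>
        rcases rep_cases q (i + 1) with ⟨c4, c4'⟩ | ⟨c4, c4'⟩ <;> omega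

theorem lemB3 (hq : 2 ≤ q) (i p r : ZMod q) (hi : i ≠ 0) (hp : p ≠ i)
    (hr : r ≠ i + 1) (hpr : p ≠ r) (hA : (i - p).val < (r - p).val)
    (h1 : rep q p < rep q i) (h2 : rep q r < rep q (i + 1)) :
    rep q r < rep q p := by
  have e1 := subval' q p i
  have e2 := subval' q p r
  have e3 := val_succ q hq i
  have b1 := i.val_lt; have b2 := p.val_lt; have b3 := r.val_lt
  have b4 := (i + 1).val_lt; have b5 := (i - p).val_lt; have b6 := (r - p).val_lt
  have n1 : i.val ≠ 0 := fun h => hi ((ZMod.val_eq_zero i).mp h)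
  have n2 := vne_of_ne q hp
  have n3 := vne_of_ne q hr
  have n4 := valsub_ne q (show i ≠ p from fun h => hp h.symm)
  have n5 := valsub_ne q (show r ≠ p from fun h => hpr h.symm)
  rcases rep_cases q i with ⟨c1, c1'⟩ | ⟨c1, c1'⟩ <;>
    rcases rep_cases q p with ⟨c2, c2'⟩ | ⟨c2, c2'⟩ <;>
      rcases rep_cases q r with ⟨c3, c3'⟩ | ⟨c3, c3'⟩ <;>
        rcases rep_cases q (i + 1) with ⟨c4, c4'⟩ | ⟨c4, c4'⟩ <;> omega

end AuxLemmas

section TraceLemma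

variable (q : ℕ) [NeZero q]

theorem valadd' (a b : ZMod q) :
    (a + b).val = a.val + b.val ∨ (a + b).val + q = a.val + b.val := by
  have h := ZMod.val_add a b
  have b1 := a.val_lt; have b2 := b.val_lt
  by_cases hc : a.val + b.val < q
  · left; rw [h, Nat.mod_eq_of_lt hc]
  · right
    have : (a.val + b.val) % q = (a.val + b.val - q) % q := by
      conv_lhs => rw [← Nat.sub_add_cancel (le_of_not_gt hc), Nat.add_mod_right]
    rw [h, this, Nat.mod_eq_of_lt (by omega)]
    omega

theorem reindex_sum (f : ZMod q → ℤ) : ∑ i : ZMod q, f (i + 1) = ∑ i : ZMod q, f i :=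
  Fintype.sum_equiv (Equiv.addRight 1) _ _ (fun _ => rfl)

theorem trace_eq (hq : 2 ≤ q) (σ : Equiv.Perm (ZMod q)) (hfp : ∀ i, σ i ≠ i) :
    ∑ i : ZMod q, (if (i - σ i).val < (σ (i + 1) - σ i).val then (1 : ℤ) else 0)
      = (desNum q σ : ℤ) - 1 := by
  haveI : Fact (1 < q) := ⟨hq⟩
  have hone : (1 : ZMod q) ≠ 0 := one_ne_zero
  have hne : ∀ i : ZMod q, i + 1 ≠ i := fun i h => hone (by rwa [add_eq_left] at h)
  have hσne : ∀ i : ZMod q, σ (i + 1) ≠ σ i := fun i h => hne i (σ.injective h)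
  -- pointwise 1
  have pw1 : ∀ i : ZMod q, ((σ (i + 1) - σ i).val : ℤ)
      = ((σ (i + 1)).val : ℤ) - ((σ i).val : ℤ)
        + q * (if (σ (i + 1)).val < (σ i).val then 1 else 0) := by
    intro i
    have e := subval' q (σ i) (σ (i + 1))
    have vne := vne_of_ne q (hσne i)
    have b1 := (σ (i + 1)).val_lt
    have b2 := (σ i).val_lt
    have b3 := (σ (i + 1) - σ i).val_lt
    split_ifs with h <;> omega
  -- pointwise 2
  have zconv : ∀ a : ZMod q, (if a = 0 then (1 : ℤ) else 0) = (if a.val = 0 then (1 : ℤ) else 0) := by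
    intro a
    by_cases h : a = 0
    · simp [h]
    · rw [if_neg h, if_neg (fun hv => h ((ZMod.val_eq_zero a).mp hv))]
  have pw2 : ∀ i : ZMod q, (if (σ (i + 1)).val < (σ i).val then (1 : ℤ) else 0)
      = (if rep q (σ (i + 1)) < rep q (σ i) then (1 : ℤ) else 0)
        + (if σ (i + 1) = 0 then (1 : ℤ) else 0) - (if σ i = 0 then (1 : ℤ) else 0) := by
    intro i
    rw [zconv, zconv]
    have vne := vne_of_ne q (hσne i)
    have b1 := (σ (i + 1)).val_lt
    have b2 := (σ i).val_lt
    rcases rep_cases q (σ (i + 1)) with ⟨c1, c1'⟩ | ⟨c1, c1'⟩ <;>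
      rcases rep_cases q (σ i) with ⟨c2, c2'⟩ | ⟨c2, c2'⟩ <;>
        split_ifs <;> omega
  -- pointwise 3
  have pw3 : ∀ i : ZMod q, (((i + 1) - σ (i + 1)).val : ℤ)
      = ((i - σ i).val : ℤ) + 1 - ((σ (i + 1) - σ i).val : ℤ)
        + q * (if (i - σ i).val < (σ (i + 1) - σ i).val then 1 else 0) := by
    intro i
    have hw : ((i + 1) - σ (i + 1)) + (σ (i + 1) - σ i) = (i - σ i) + 1 := by ring
    have e := valadd' q ((i + 1) - σ (i + 1)) (σ (i + 1) - σ i)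
    rw [hw] at e
    have e3 := val_succ q hq (i - σ i)
    have nw : ((i + 1) - σ (i + 1)).val ≠ 0 := valsub_ne q (fun h => hfp (i + 1) h.symm)
    have nv : (σ (i + 1) - σ i).val ≠ 0 := valsub_ne q (hσne i)
    have b1 := ((i + 1) - σ (i + 1)).val_lt
    have b2 := (σ (i + 1) - σ i).val_lt
    have b3 := (i - σ i).val_lt
    have b4 := ((i - σ i) + 1).val_lt
    split_ifs with h <;> omega
  -- summing pw3
  have sum3 := Finset.sum_congr rfl (fun i (_ : i ∈ Finset.univ) => pw3 i)
  have sum1 := Finset.sum_congr rfl (fun i (_ : i ∈ Finset.univ) => pw1 i)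
  have sum2 := Finset.sum_congr rfl (fun i (_ : i ∈ Finset.univ) => pw2 i)
  have re1 : ∑ i : ZMod q, (((i + 1) - σ ((i) + 1)).val : ℤ) = ∑ i : ZMod q, ((i - σ i).val : ℤ) :=
    reindex_sum q (fun i => ((i - σ i).val : ℤ))
  have re2 : ∑ i : ZMod q, ((σ (i + 1)).val : ℤ) = ∑ i : ZMod q, ((σ i).val : ℤ) :=
    reindex_sum q (fun i => ((σ i).val : ℤ))
  have re3 : ∑ i : ZMod q, (if σ (i + 1) = 0 then (1 : ℤ) else 0)
      = ∑ i : ZMod q, (if σ i = 0 then (1 : ℤ) else 0) :=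
    reindex_sum q (fun i => if σ i = 0 then (1 : ℤ) else 0)
  have hcard : ∑ _i : ZMod q, (1 : ℤ) = q := by
    simp [Finset.card_univ, ZMod.card]
  have hdes : ∑ i : ZMod q, (if rep q (σ (i + 1)) < rep q (σ i) then (1 : ℤ) else 0)
      = (desNum q σ : ℤ) := by
    rw [desNum, Finset.card_filter, Nat.cast_sum]
    simp
  -- totals
  simp only [Finset.sum_add_distrib, Finset.sum_sub_distrib, ← Finset.mul_sum] at sum3 sum1 sum2
  rw [re1, hcard] at sum3
  rw [re2] at sum1
  rw [hdes, re3] at sum2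
  have hq0 : (q : ℤ) ≠ 0 := by exact_mod_cast (NeZero.ne q)
  have hdv : (q : ℤ) * (∑ i : ZMod q, if (σ (i + 1)).val < (σ i).val then (1 : ℤ) else 0)
      = (q : ℤ) * (desNum q σ : ℤ) := by
    have h2 : (∑ i : ZMod q, if (σ (i + 1)).val < (σ i).val then (1 : ℤ) else 0)
        = (desNum q σ : ℤ) := by linarith
    rw [h2]
  apply mul_left_cancel₀ hq0
  rw [mul_sub, mul_one]
  linarith [sum3, sum1, hdv]

end TraceLemma

/-- Let `(m_d, 𝒪)` be the unique realization of a `q`-cycle `σ` with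
`d = des σ ≥ 2` and `a_q = 1`. Then each marked interval contains exactly one
fixed point of `m_d`; more precisely the `j`-th marked interval `I_{i_j}`
(so `j = markRank q σ i` for a marked index `i`) contains the fixed point
`j/(d-1)` of `m_d`. -/
theorem marked_interval_fixed_points (q d : ℕ) [NeZero q] (hq : 2 ≤ q)
    (σ : Equiv.Perm (ZMod q)) (hσ : IsQCycle q σ) (hd : desNum q σ = d)
    (hd2 : 2 ≤ d) (hsig : transMatrix q σ 0 0 = 1)
    (x : ZMod q → ℝ) (hx : MkRealization q d σ x) :
    ∀ i : ZMod q, transMatrix q σ i i = 1 →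
      fixDist q d x i = 1 ∧
      x i < (markRank q σ i : ℝ) / ((d : ℝ) - 1) ∧
      (markRank q σ i : ℝ) / ((d : ℝ) - 1) < upperPt q x i := by
  haveI : Fact (1 < q) := ⟨hq⟩
  obtain ⟨hIoo, hrlt, hF⟩ := hx
  choose m hm using hF
  have hone : (1 : ZMod q) ≠ 0 := one_ne_zero
  have hne : ∀ i : ZMod q, i + 1 ≠ i := fun i h => hone (by rwa [add_eq_left] at h)
  have hfp : ∀ i : ZMod q, σ i ≠ i := by
    intro i h
    obtain ⟨n, hn⟩ := hσ i (i + 1)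
    have hit : ∀ k : ℕ, (σ ^ k) i = i := by
      intro k
      induction k with
      | zero => rfl
      | succ k ih => rw [pow_succ, Equiv.Perm.mul_apply, h, ih]
    rw [hit n] at hn
    exact hne i hn.symm
  have hσne : ∀ i : ZMod q, σ (i + 1) ≠ σ i := fun i h => hne i (σ.injective h)
  have hrep_bd : ∀ a : ZMod q, 1 ≤ rep q a ∧ rep q a ≤ q := by
    intro a
    have := a.val_lt
    rcases rep_cases q a with ⟨h1, h2⟩ | ⟨h1, h2⟩ <;> omega
  have hx_iff : ∀ i j : ZMod q, x i < x j ↔ rep q i < rep q j := by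
    intro i j
    constructor
    · intro h
      by_contra hc
      push_neg at hc
      rcases eq_or_lt_of_le hc with he | hlt
      · rw [rep_inj q he.symm] at h; exact lt_irrefl _ h
      · exact absurd (hrlt j i hlt) (by linarith)
    · exact hrlt i j
  have hrep_succ : ∀ i : ZMod q, i ≠ 0 → rep q (i + 1) = rep q i + 1 := by
    intro i h0
    have e3 := val_succ q hq i
    have n1 : i.val ≠ 0 := fun h => h0 ((ZMod.val_eq_zero i).mp h)
    have b1 := i.val_lt
    have b4 := (i + 1).val_lt
    rcases rep_cases q i with ⟨c1, c1'⟩ | ⟨c1, c1'⟩ <;>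
      rcases rep_cases q (i + 1) with ⟨c2, c2'⟩ | ⟨c2, c2'⟩ <;> omega
  have hdR : (0 : ℝ) < (d : ℝ) - 1 := by
    have : (2 : ℝ) ≤ (d : ℝ) := by exact_mod_cast hd2
    linarith
  have hm_eq : ∀ i, ((d : ℝ) - 1) * x i = (m i : ℝ) + (x (σ i) - x i) := by
    intro i
    have h := hm i
    simp only at h
    linarith
  have hm_lb : ∀ i, 0 ≤ m i := by
    intro i
    have h := hm i
    simp only at h
    have o1 := (hIoo i).1
    have o2 := (hIoo (σ i)).2
    have hd0 : (0 : ℝ) < (d : ℝ) := by linarith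
    have : (-1 : ℝ) < (m i : ℝ) := by nlinarith
    have : (-1 : ℤ) < m i := by exact_mod_cast this
    omega
  have hm_ub : ∀ i, m i ≤ (d : ℤ) - 1 := by
    intro i
    have h := hm i
    simp only at h
    have o1 := (hIoo i).2
    have o2 := (hIoo (σ i)).1
    have : (m i : ℝ) < (d : ℝ) := by nlinarith
    have : m i < (d : ℤ) := by exact_mod_cast this
    omega
  have hxsucc : ∀ i : ZMod q, i ≠ 0 → x i < x (i + 1) := by
    intro i h0
    rw [hx_iff, hrep_succ i h0]
    omega
  have hmono : ∀ i : ZMod q, i ≠ 0 → m i ≤ m (i + 1) := by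
    intro i h0
    have h1 := hm i
    have h2 := hm (i + 1)
    simp only at h1 h2
    have hxx := hxsucc i h0
    have hd0 : (0 : ℝ) < (d : ℝ) := by linarith
    have hlt : (d : ℝ) * x i < (d : ℝ) * x (i + 1) := by nlinarith
    have o1 := (hIoo (σ i)).1
    have o2 := (hIoo (σ (i + 1))).2
    have : (m i : ℝ) - 1 < (m (i + 1) : ℝ) := by linarith
    have : m i - 1 < m (i + 1) := by exact_mod_cast this
    omega
  have hdesc : ∀ i : ZMod q, i ≠ 0 → x (σ (i + 1)) < x (σ i) → m i + 1 ≤ m (i + 1) := by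
    intro i h0 hdsc
    have h1 := hm i
    have h2 := hm (i + 1)
    simp only at h1 h2
    have hxx := hxsucc i h0
    have hd0 : (0 : ℝ) < (d : ℝ) := by linarith
    have hlt : (d : ℝ) * x i < (d : ℝ) * x (i + 1) := by nlinarith
    have : (m i : ℝ) < (m (i + 1) : ℝ) := by linarith
    have : m i < m (i + 1) := by exact_mod_cast this
    omega
  set ε : ZMod q → ℤ := fun i => if rep q i < rep q (σ i) then 1 else 0 with hε
  set A : ZMod q → ℤ :=
    fun i => if (i - σ i).val < (σ (i + 1) - σ i).val then 1 else 0 with hA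
  have hε01 : ∀ i, ε i = 0 ∨ ε i = 1 := by
    intro i
    simp only [hε]
    split_ifs <;> simp
  have hε1rep : ∀ i, ε i = 1 → rep q i < rep q (σ i) := by
    intro i h
    simp only [hε] at h
    split_ifs at h with hc
    · exact hc
    · omega
  have hε0rep : ∀ i, ε i = 0 → rep q (σ i) < rep q i := by
    intro i h
    simp only [hε] at h
    split_ifs at h with hc
    · omega
    · have : rep q (σ i) ≠ rep q i := fun hh => hfp i (rep_inj q hh)
      omega
  have hε1x : ∀ i, ε i = 1 → x i < x (σ i) := fun i h => (hx_iff _ _).mpr (hε1rep i h)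
  have hε0x : ∀ i, ε i = 0 → x (σ i) < x i := fun i h => (hx_iff _ _).mpr (hε0rep i h)
  have hrep0 : rep q (0 : ZMod q) = q := by simp [rep]
  have hrep1 : rep q (1 : ZMod q) = q ∨ rep q (1 : ZMod q) = 1 := by
    rcases rep_cases q 1 with ⟨h1, _⟩ | ⟨h1, _⟩
    · right; rw [h1, ZMod.val_one]
    · left; exact h1
  have hrep1' : rep q (1 : ZMod q) = 1 := by
    rcases hrep1 with h | h
    · exfalso; have := ZMod.val_one q; rcases rep_cases q 1 with ⟨h1, h2⟩ | ⟨h1, h2⟩ <;> omega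
    · exact h
  have hε0 : ε 0 = 0 := by
    simp only [hε]
    rw [if_neg]
    rw [hrep0]
    have := (hrep_bd (σ 0)).2
    omega
  have hε1 : ε 1 = 1 := by
    simp only [hε]
    rw [if_pos]
    rw [hrep1']
    have h2 := (hrep_bd (σ 1)).1
    have : rep q (σ 1) ≠ 1 := by
      rw [← hrep1']
      exact fun hh => hfp 1 (rep_inj q hh)
    omega
  have hmark : ∀ i : ZMod q,
      transMatrix q σ i i = 1 ↔ (i - σ i).val < (σ (i + 1) - σ i).val := by
    intro i
    rw [transMatrix]
    simp only [Matrix.of_apply]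
    split_ifs with h
    · exact ⟨fun _ => h, fun _ => rfl⟩
    · exact ⟨fun h01 => absurd h01 (by norm_num), fun hc => absurd hc h⟩
  set F : ZMod q → ℤ :=
    fun i => m (i + 1) + ε (i + 1) - m i - ε i + if i = 0 then (d : ℤ) - 1 else 0 with hFd
  have hFA : ∀ i, A i ≤ F i := by
    intro i
    have hAle : A i ≤ 1 ∧ 0 ≤ A i := by
      simp only [hA]
      split_ifs <;> omega
    by_cases h0 : i = 0
    · subst h0
      simp only [hFd, eq_self_iff_true, if_true, zero_add]
      rw [hε0, hε1]
      have u1 := hm_ub 0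
      have u2 := hm_lb 1
      omega
    · simp only [hFd, if_neg h0, add_zero]
      have hm01 := hmono i h0
      have hArgs : σ i ≠ σ (i + 1) := fun h => hσne i h.symm
      rcases hε01 i with e0 | e1 <;> rcases hε01 (i + 1) with f0 | f1
      · -- ε i = 0, ε (i+1) = 0
        by_cases hAi : (i - σ i).val < (σ (i + 1) - σ i).val
        · have hdd := lemB3 q hq i (σ i) (σ (i + 1)) h0 (hfp i) (hfp (i + 1)) hArgs hAi
            (hε0rep i e0) (hε0rep (i + 1) f0)
          have := hdesc i h0 ((hx_iff _ _).mpr hdd)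
          simp only [hA, if_pos hAi]
          omega
        · simp only [hA, if_neg hAi]
          omega
      · -- ε i = 0, ε (i+1) = 1
        omega
      · -- ε i = 1, ε (i+1) = 0
        have hdd : rep q (σ (i + 1)) < rep q (σ i) := by
          have r1 := hε1rep i e1
          have r2 := hε0rep (i + 1) f0
          have r3 := hrep_succ i h0
          omega
        have hstep := hdesc i h0 ((hx_iff _ _).mpr hdd)
        by_cases hAi : (i - σ i).val < (σ (i + 1) - σ i).val
        · exact absurd (hε1rep i e1) (fun hh => lemB1 q hq i (σ i) (σ (i + 1)) h0 (hfp i)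
            (hfp (i + 1)) hArgs hAi hh (hε0rep (i + 1) f0))
        · simp only [hA, if_neg hAi]
          omega
      · -- ε i = 1, ε (i+1) = 1
        by_cases hAi : (i - σ i).val < (σ (i + 1) - σ i).val
        · have hdd := lemB2 q hq i (σ i) (σ (i + 1)) h0 (hfp i) (hfp (i + 1)) hArgs hAi
            (hε1rep i e1) (hε1rep (i + 1) f1)
          have := hdesc i h0 ((hx_iff _ _).mpr hdd)
          simp only [hA, if_pos hAi]
          omega
        · simp only [hA, if_neg hAi]
          omega
  have hsumF : ∑ i : ZMod q, F i = (d : ℤ) - 1 := by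
    simp only [hFd]
    rw [Finset.sum_add_distrib]
    have t1 : ∀ i : ZMod q, m (i + 1) + ε (i + 1) - m i - ε i
        = (fun j => m j + ε j) (i + 1) - (fun j => m j + ε j) i := fun i => by ring
    rw [Finset.sum_congr rfl (fun i _ => t1 i), Finset.sum_sub_distrib,
      reindex_sum q (fun j => m j + ε j), sub_self, zero_add]
    rw [Finset.sum_ite_eq' Finset.univ (0 : ZMod q) (fun _ => (d : ℤ) - 1)]
    simp
  have hsumA : ∑ i : ZMod q, A i = (d : ℤ) - 1 := by
    simp only [hA]
    rw [trace_eq q hq σ hfp, hd]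
  have hFAeq : ∀ i, F i = A i := by
    by_contra hc
    push_neg at hc
    obtain ⟨i0, hi0⟩ := hc
    have hlt : A i0 < F i0 := lt_of_le_of_ne (hFA i0) (Ne.symm hi0)
    have := Finset.sum_lt_sum (fun i (_ : i ∈ Finset.univ) => hFA i)
      ⟨i0, Finset.mem_univ i0, hlt⟩
    rw [hsumA, hsumF] at this
    exact lt_irrefl _ this
  have hA0 : A 0 = 1 := by
    simp only [hA]
    rw [if_pos ((hmark 0).mp hsig)]
  have hm10 : m 1 = 0 ∧ m 0 = (d : ℤ) - 1 := by
    have h := (hFAeq 0).trans hA0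
    simp only [hFd, eq_self_iff_true, if_true, zero_add] at h
    rw [hε0, hε1] at h
    have u1 := hm_ub 0
    have u2 := hm_lb 1
    omega
  have hNrec : ∀ i : ZMod q, i ≠ 0 → m (i + 1) + ε (i + 1) = m i + ε i + A i := by
    intro i h0
    have h := hFAeq i
    simp only [hFd, if_neg h0, add_zero] at h
    omega
  have hkey : ∀ r : ℕ, 1 ≤ r → r ≤ q →
      m ((r : ZMod q)) + ε ((r : ZMod q)) = 1 +
        ((Finset.univ.filter fun i' : ZMod q =>
          (i' - σ i').val < (σ (i' + 1) - σ i').val ∧ rep q i' < r).card : ℤ) := by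
    intro r
    induction r with
    | zero => intro h1 _; exact absurd h1 (by omega)
    | succ r ih =>
      intro _ hr1
      by_cases hr : r = 0
      · subst hr
        have hc1 : ((0 + 1 : ℕ) : ZMod q) = 1 := by norm_num
        rw [hc1, hm10.1, hε1]
        have hempty : (Finset.univ.filter fun i' : ZMod q =>
            (i' - σ i').val < (σ (i' + 1) - σ i').val ∧ rep q i' < 0 + 1) = ∅ := by
          rw [Finset.eq_empty_iff_forall_notMem]
          intro i' hmem
          rw [Finset.mem_filter] at hmem
          have := (hrep_bd i').1
          omega
        rw [hempty]
        simp
      · have h1r : 1 ≤ r := by omega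
        have hrq : r < q := by omega
        have ihh := ih h1r (by omega)
        have hvr : ((r : ZMod q)).val = r := ZMod.val_cast_of_lt hrq
        have hlab0 : ((r : ZMod q)) ≠ 0 := by
          intro h
          rw [h, ZMod.val_zero] at hvr
          omega
        have hrepr : rep q ((r : ZMod q)) = r := by rw [rep, if_neg hlab0, hvr]
        have hcast : ((r + 1 : ℕ) : ZMod q) = (r : ZMod q) + 1 := by push_cast; ring
        rw [hcast, hNrec _ hlab0, ihh]
        by_cases hcond : (((r : ZMod q)) - σ ((r : ZMod q))).val
            < (σ (((r : ZMod q)) + 1) - σ ((r : ZMod q))).val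
        · have hins : (Finset.univ.filter fun i' : ZMod q =>
              (i' - σ i').val < (σ (i' + 1) - σ i').val ∧ rep q i' < r + 1)
              = insert ((r : ZMod q)) (Finset.univ.filter fun i' : ZMod q =>
                (i' - σ i').val < (σ (i' + 1) - σ i').val ∧ rep q i' < r) := by
            ext i'
            simp only [Finset.mem_insert, Finset.mem_filter, Finset.mem_univ, true_and]
            constructor
            · rintro ⟨hc1, hc2⟩
              by_cases hir : rep q i' = r
              · exact Or.inl (rep_inj q (hir.trans hrepr.symm))
              · exact Or.inr ⟨hc1, by omega⟩
            · rintro (rfl | ⟨hc1, hc2⟩)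
              · exact ⟨hcond, by rw [hrepr]; omega⟩
              · exact ⟨hc1, by omega⟩
          rw [hins, Finset.card_insert_of_notMem (by
            simp only [Finset.mem_filter, Finset.mem_univ, true_and, hrepr]
            omega)]
          have hA1 : A ((r : ZMod q)) = 1 := by simp only [hA]; rw [if_pos hcond]
          rw [hA1]
          push_cast
          ring
        · have heqf : (Finset.univ.filter fun i' : ZMod q =>
              (i' - σ i').val < (σ (i' + 1) - σ i').val ∧ rep q i' < r + 1)
              = (Finset.univ.filter fun i' : ZMod q =>
                (i' - σ i').val < (σ (i' + 1) - σ i').val ∧ rep q i' < r) := by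
            ext i'
            simp only [Finset.mem_filter, Finset.mem_univ, true_and]
            constructor
            · rintro ⟨hc1, hc2⟩
              refine ⟨hc1, ?_⟩
              by_cases hir : rep q i' = r
              · exact absurd hc1 (by rw [rep_inj q (hir.trans hrepr.symm)]; exact hcond)
              · omega
            · rintro ⟨hc1, hc2⟩
              exact ⟨hc1, by omega⟩
          rw [heqf]
          have hA1 : A ((r : ZMod q)) = 0 := by simp only [hA]; rw [if_neg hcond]
          rw [hA1]
          ring
  have hcast_i : ∀ i : ZMod q, i ≠ 0 → ((rep q i : ℕ) : ZMod q) = i := by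
    intro i h0
    rw [rep, if_neg h0]
    exact ZMod.natCast_rightInverse i
  have hrmark : ∀ i : ZMod q, i ≠ 0 → ((i - σ i).val < (σ (i + 1) - σ i).val) →
      (markRank q σ i : ℤ) = m i + ε i := by
    intro i h0 hcond
    have hb := hrep_bd i
    have hkk := hkey (rep q i) hb.1 hb.2
    rw [hcast_i i h0] at hkk
    rw [markRank]
    have hfc : Finset.univ.filter (fun i' : ZMod q =>
          transMatrix q σ i' i' = 1 ∧ rep q i' ≤ rep q i)
        = insert i (Finset.univ.filter fun i' : ZMod q =>
            (i' - σ i').val < (σ (i' + 1) - σ i').val ∧ rep q i' < rep q i) := by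
      ext i'
      simp only [Finset.mem_insert, Finset.mem_filter, Finset.mem_univ, true_and, hmark i']
      constructor
      · rintro ⟨h1, h2⟩
        by_cases h3 : rep q i' = rep q i
        · exact Or.inl (rep_inj q h3)
        · exact Or.inr ⟨h1, by omega⟩
      · rintro (rfl | ⟨h1, h2⟩)
        · exact ⟨hcond, le_refl _⟩
        · exact ⟨h1, by omega⟩
    rw [hfc, Finset.card_insert_of_notMem (by
      simp [Finset.mem_filter, lt_self_iff_false])]
    push_cast
    omega
  have hmark0 : (markRank q σ 0 : ℤ) = (d : ℤ) - 1 := by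
    rw [markRank]
    have hfc : Finset.univ.filter (fun i' : ZMod q =>
          transMatrix q σ i' i' = 1 ∧ rep q i' ≤ rep q 0)
        = Finset.univ.filter (fun i' : ZMod q =>
            (i' - σ i').val < (σ (i' + 1) - σ i').val) := by
      apply Finset.filter_congr
      intro i' _
      rw [hmark i', hrep0]
      exact and_iff_left (hrep_bd i').2
    rw [hfc]
    have hcf : ((Finset.univ.filter (fun i' : ZMod q =>
          (i' - σ i').val < (σ (i' + 1) - σ i').val)).card : ℤ)
        = ∑ i : ZMod q, A i := by
      rw [Finset.card_filter, Nat.cast_sum]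
      simp only [hA]
      push_cast
      rfl
    rw [hcf, hsumA]
  intro i hTi
  have hcond : (i - σ i).val < (σ (i + 1) - σ i).val := (hmark i).mp hTi
  have hd0 : (0 : ℝ) < (d : ℝ) := by linarith
  by_cases h0 : i = 0
  · subst h0
    have hmrn : markRank q σ 0 = d - 1 := by
      have := hmark0
      omega
    have hmrR : (markRank q σ 0 : ℝ) = (d : ℝ) - 1 := by
      rw [hmrn, Nat.cast_sub (by omega : 1 ≤ d), Nat.cast_one]
    have hup : upperPt q x 0 = x 1 + 1 := by rw [upperPt, if_pos rfl]
    have hg2 : x 0 < (markRank q σ 0 : ℝ) / ((d : ℝ) - 1) := by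
      rw [hmrR, div_self (ne_of_gt hdR)]
      exact (hIoo 0).2
    have hg3 : (markRank q σ 0 : ℝ) / ((d : ℝ) - 1) < upperPt q x 0 := by
      rw [hmrR, div_self (ne_of_gt hdR), hup]
      have := (hIoo 1).1
      linarith
    refine ⟨?_, hg2, hg3⟩
    simp only [fixDist]
    have hxσ0 := hε0x 0 hε0
    have hxσ1 := hε1x 1 hε1
    have hmeq0 := hm_eq 0
    have hmeq1 := hm_eq 1
    have hm0R : ((m 0 : ℤ) : ℝ) = (d : ℝ) - 1 := by
      rw [hm10.2]; push_cast; ring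
    have hm1R : ((m 1 : ℤ) : ℝ) = 0 := by rw [hm10.1]; norm_num
    have hset : ((Finset.Icc 1 (2 * (d - 1))).filter fun j : ℕ =>
        x 0 < (j : ℝ) / ((d : ℝ) - 1) ∧ (j : ℝ) / ((d : ℝ) - 1) < upperPt q x 0)
        = {d - 1} := by
      ext j
      simp only [Finset.mem_filter, Finset.mem_Icc, Finset.mem_singleton, hup]
      constructor
      · rintro ⟨⟨hj1, hj2⟩, hP1, hP2⟩
        have hP1' : x 0 * ((d : ℝ) - 1) < j := (lt_div_iff₀ hdR).mp hP1
        have hP2' : (j : ℝ) < (x 1 + 1) * ((d : ℝ) - 1) := (div_lt_iff₀ hdR).mp hP2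
        have o1 := (hIoo (σ 0)).1
        have o2 := (hIoo 0).2
        have o3 := (hIoo (σ 1)).2
        have o4 := (hIoo 1).1
        have l1 : (d : ℝ) - 2 < (j : ℝ) := by linarith
        have u1 : (j : ℝ) < (d : ℝ) := by linarith
        have l1' : (d : ℤ) - 2 < (j : ℤ) := by exact_mod_cast l1
        have u1' : (j : ℤ) < (d : ℤ) := by exact_mod_cast u1
        omega
      · rintro rfl
        have hjR : ((d - 1 : ℕ) : ℝ) = (d : ℝ) - 1 := by
          rw [Nat.cast_sub (by omega : 1 ≤ d), Nat.cast_one]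
        refine ⟨⟨by omega, by omega⟩, ?_, ?_⟩
        · rw [hjR, div_self (ne_of_gt hdR)]
          exact (hIoo 0).2
        · rw [hjR, div_self (ne_of_gt hdR)]
          have := (hIoo 1).1
          linarith
    rw [hset, Finset.card_singleton]
  · have hmr := hrmark i h0 hcond
    have hup : upperPt q x i = x (i + 1) := by rw [upperPt, if_neg h0]
    have hA1 : A i = 1 := by simp only [hA]; rw [if_pos hcond]
    have hrec : m (i + 1) + ε (i + 1) = m i + ε i + 1 := by rw [hNrec i h0, hA1]
    have hN1 : 1 ≤ markRank q σ i := by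
      have hmem : i ∈ Finset.univ.filter (fun i' : ZMod q =>
          transMatrix q σ i' i' = 1 ∧ rep q i' ≤ rep q i) := by
        simp [Finset.mem_filter, hTi]
      have := Finset.card_pos.mpr ⟨i, hmem⟩
      simpa [markRank] using this
    have hNub : (markRank q σ i : ℤ) ≤ (d : ℤ) := by
      rw [hmr]
      have := hm_ub i
      rcases hε01 i with e | e <;> omega
    have hmrR : (markRank q σ i : ℝ) = ((m i : ℤ) : ℝ) + ((ε i : ℤ) : ℝ) := by
      exact_mod_cast hmr
    have hmeqi := hm_eq i
    have hmeqs := hm_eq (i + 1)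
    have hg2 : x i < (markRank q σ i : ℝ) / ((d : ℝ) - 1) := by
      rw [lt_div_iff₀ hdR, hmrR]
      rcases hε01 i with e | e
      · have hx1 := hε0x i e
        have heR : ((ε i : ℤ) : ℝ) = 0 := by rw [e]; norm_num
        linarith
      · have hx1 := hε1x i e
        have heR : ((ε i : ℤ) : ℝ) = 1 := by rw [e]; norm_num
        have o1 := (hIoo (σ i)).2
        have o2 := (hIoo i).1
        linarith
    have hg3' : (markRank q σ i : ℝ) / ((d : ℝ) - 1) < x (i + 1) := by
      rw [div_lt_iff₀ hdR, hmrR]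
      have hrecR : ((m (i + 1) : ℤ) : ℝ) + ((ε (i + 1) : ℤ) : ℝ)
          = ((m i : ℤ) : ℝ) + ((ε i : ℤ) : ℝ) + 1 := by exact_mod_cast hrec
      rcases hε01 (i + 1) with f | f
      · have hx1 := hε0x (i + 1) f
        have hfR : ((ε (i + 1) : ℤ) : ℝ) = 0 := by rw [f]; norm_num
        have o1 := (hIoo (σ (i + 1))).1
        have o2 := (hIoo (i + 1)).2
        linarith
      · have hx1 := hε1x (i + 1) f
        have hfR : ((ε (i + 1) : ℤ) : ℝ) = 1 := by rw [f]; norm_num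
        linarith
    have hg3 : (markRank q σ i : ℝ) / ((d : ℝ) - 1) < upperPt q x i := by
      rw [hup]; exact hg3'
    refine ⟨?_, hg2, hg3⟩
    simp only [fixDist]
    have hset : ((Finset.Icc 1 (2 * (d - 1))).filter fun j : ℕ =>
        x i < (j : ℝ) / ((d : ℝ) - 1) ∧ (j : ℝ) / ((d : ℝ) - 1) < upperPt q x i)
        = {markRank q σ i} := by
      ext j
      simp only [Finset.mem_filter, Finset.mem_Icc, Finset.mem_singleton, hup]
      constructor
      · rintro ⟨⟨hj1, hj2⟩, hP1, hP2⟩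
        have hP1' : x i * ((d : ℝ) - 1) < j := (lt_div_iff₀ hdR).mp hP1
        have hP2' : (j : ℝ) < x (i + 1) * ((d : ℝ) - 1) := (div_lt_iff₀ hdR).mp hP2
        have hge : m i + ε i ≤ (j : ℤ) := by
          rcases hε01 i with e | e
          · have hx1 := hε0x i e
            have o1 := (hIoo (σ i)).1
            have o2 := (hIoo i).2
            have h1 : ((m i : ℤ) : ℝ) - 1 < (j : ℝ) := by linarith
            have h2 : (m i : ℤ) - 1 < (j : ℤ) := by exact_mod_cast h1
            omega
          · have hx1 := hε1x i e
            have h1 : ((m i : ℤ) : ℝ) < (j : ℝ) := by linarith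
            have h2 : (m i : ℤ) < (j : ℤ) := by exact_mod_cast h1
            omega
        have hle : (j : ℤ) ≤ m i + ε i := by
          rcases hε01 (i + 1) with f | f
          · have hx1 := hε0x (i + 1) f
            have h1 : (j : ℝ) < ((m (i + 1) : ℤ) : ℝ) := by linarith
            have h2 : (j : ℤ) < m (i + 1) := by exact_mod_cast h1
            omega
          · have hx1 := hε1x (i + 1) f
            have o1 := (hIoo (σ (i + 1))).2
            have o2 := (hIoo (i + 1)).1
            have h1 : (j : ℝ) < ((m (i + 1) : ℤ) : ℝ) + 1 := by linarith
            have h2 : (j : ℤ) < m (i + 1) + 1 := by exact_mod_cast h1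
            omega
        have : (j : ℤ) = (markRank q σ i : ℤ) := by omega
        exact_mod_cast this
      · rintro rfl
        exact ⟨⟨hN1, by omega⟩, hg2, hg3'⟩
    rw [hset, Finset.card_singleton]
end
end

section
/- Every combinatorial type τ in 𝒞_q with des(τ) = d ≥ 2 and sym(τ) = s has exactly (d−1)/s realizations under the multiplication map m_d, i.e., exactly (d−1)/s period q orbits of m_d realize some cycle in the conjugacy class τ. -/
open scoped Classical

noncomputable section

/-!
If `x` realizes `π` under `m_d`, write `d xᵢ = x_{π i} + mᵢ` with integers `0 ≤ mᵢ < d`. The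
differences `m_{i+1} - mᵢ` (plus `d` at the wrap-around `i = 0`) are nonnegative, positive at
every descent of `π`, and add up to `d = des π`; so they are exactly the indicator of the descents.
Hence `0` is a descent, `mᵢ` is the number of descents before `i`, and `x` is the point with these
base-`d` digits; conversely, when `0` is a descent that point realizes `π`. The realizations of the
type of `σ` therefore correspond to the conjugates `ρʲσρ⁻ʲ` having a descent at `0`, each of which
arises from `sym σ` values of `j ∈ ℤ/q`. The shift `j = -i` works iff
`rep (σ (i + 1) - i) < rep (σ i - i)`; summing `q · [rep b < rep a] = rep (b - a) + rep a - rep b`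
over these pairs, and using that the cyclic step lengths `rep (σ (i + 1) - σ i)` add up to
`q · des σ`, exactly `des σ - 1` shifts work.
-/

open Finset

section Rep

variable {q : ℕ} [NeZero q]

lemma rep_zero : rep q 0 = q := if_pos rfl

lemma one_le_rep (i : ZMod q) : 1 ≤ rep q i := by
  unfold rep
  split_ifs with h
  · exact NeZero.one_le
  · exact Nat.one_le_iff_ne_zero.mpr ((ZMod.val_ne_zero i).mpr h)

lemma rep_le (i : ZMod q) : rep q i ≤ q := by
  unfold rep
  split_ifs
  exacts [le_rfl, (ZMod.val_lt i).le]

lemma rep_lt_of_ne_zero {i : ZMod q} (hi : i ≠ 0) : rep q i < q := by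
  rw [rep, if_neg hi]
  exact ZMod.val_lt i

lemma natCast_rep (i : ZMod q) : (rep q i : ZMod q) = i := by
  unfold rep
  split_ifs with h
  · rw [h, ZMod.natCast_self]
  · exact ZMod.natCast_zmod_val i

lemma rep_injective : Function.Injective (rep q) :=
  Function.LeftInverse.injective natCast_rep

lemma rep_eq_of_intCast_eq {i : ZMod q} {n : ℤ} (h1 : 1 ≤ n) (hn : n ≤ q)
    (h : (n : ZMod q) = i) : (rep q i : ℤ) = n := by
  have hdvd : (q : ℤ) ∣ rep q i - n := by
    rw [← ZMod.intCast_zmod_eq_zero_iff_dvd]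
    push_cast [natCast_rep, h]
    exact sub_self i
  have := one_le_rep i
  have := rep_le i
  have := Int.eq_zero_of_abs_lt_dvd hdvd (abs_lt.mpr ⟨by omega, by omega⟩)
  omega

lemma rep_one : rep q 1 = 1 := by
  exact_mod_cast rep_eq_of_intCast_eq le_rfl (by exact_mod_cast NeZero.one_le) Int.cast_one

lemma rep_add_one {i : ZMod q} (hi : i ≠ 0) : rep q (i + 1) = rep q i + 1 := by
  have := one_le_rep i
  have := rep_lt_of_ne_zero hi
  exact_mod_cast rep_eq_of_intCast_eq (n := rep q i + 1) (by omega) (by omega)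
    (by push_cast [natCast_rep]; rfl)

lemma rep_sub_of_ne {a b : ZMod q} (hab : a ≠ b) :
    (rep q (b - a) : ℤ) = rep q b - rep q a + if rep q b < rep q a then (q : ℤ) else 0 := by
  have hne : rep q a ≠ rep q b := rep_injective.ne hab
  have := one_le_rep a
  have := one_le_rep b
  have := rep_le a
  have := rep_le b
  apply rep_eq_of_intCast_eq
  · split_ifs <;> omega
  · split_ifs <;> omega
  · split_ifs <;> push_cast [natCast_rep] <;> simp

lemma rep_induction {P : ZMod q → Prop} (h1 : P 1) (hstep : ∀ i, i ≠ 0 → P i → P (i + 1))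
    (i : ZMod q) : P i := by
  suffices ∀ n : ℕ, ∀ i, rep q i = n + 1 → P i from
    this (rep q i - 1) i (by have := one_le_rep i; omega)
  intro n
  induction n with
  | zero =>
    intro i hi
    rwa [← natCast_rep i, hi, Nat.cast_one]
  | succ n ih =>
    intro i hi
    have hi1 : i - 1 ≠ 0 := by
      rintro h
      rw [sub_eq_zero.mp h, rep_one] at hi
      omega
    have := rep_add_one hi1
    rw [sub_add_cancel] at this
    simpa using hstep _ hi1 (ih _ (by omega))

end Rep

section Descents

variable {q : ℕ}

lemma apply_ne_apply_add_one (hq : 2 ≤ q) (π : Equiv.Perm (ZMod q)) (i : ZMod q) :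
    π i ≠ π (i + 1) := by
  have : Fact (1 < q) := ⟨hq⟩
  simp

variable [NeZero q]

def descents (q : ℕ) [NeZero q] (π : Equiv.Perm (ZMod q)) : Finset (ZMod q) :=
  {i | rep q (π (i + 1)) < rep q (π i)}

lemma card_descents (π : Equiv.Perm (ZMod q)) : #(descents q π) = desNum q π := rfl

lemma desNum_le (π : Equiv.Perm (ZMod q)) : desNum q π ≤ q :=
  (card_filter_le _ _).trans_eq (ZMod.card q)

lemma natCast_mul_card_filter_rep_lt {f g : ZMod q → ZMod q} (hfg : ∀ i, f i ≠ g i) :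
    (q : ℤ) * #{i | rep q (g i) < rep q (f i)} =
      ∑ i, ((rep q (g i - f i) : ℤ) - rep q (g i) + rep q (f i)) := by
  rw [card_filter, Nat.cast_sum, mul_sum]
  refine sum_congr rfl fun i _ => ?_
  rw [rep_sub_of_ne (hfg i)]
  split_ifs <;> push_cast <;> ring

lemma sum_rep_sub_eq_mul_desNum (hq : 2 ≤ q) (π : Equiv.Perm (ZMod q)) :
    ∑ i, (rep q (π (i + 1) - π i) : ℤ) = q * desNum q π := by
  have hshift : ∑ i, (rep q (π (i + 1)) : ℤ) = ∑ i, (rep q (π i) : ℤ) :=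
    Fintype.sum_equiv (Equiv.addRight 1) _ _ fun _ => rfl
  rw [desNum, natCast_mul_card_filter_rep_lt (apply_ne_apply_add_one hq π), sum_add_distrib,
    sum_sub_distrib, hshift, sub_add_cancel]

end Descents

section RotConj

variable {q : ℕ}

def rotConj (σ : Equiv.Perm (ZMod q)) (a : ZMod q) : Equiv.Perm (ZMod q) :=
  Equiv.addRight a * σ * (Equiv.addRight a)⁻¹

lemma rotConj_apply (σ : Equiv.Perm (ZMod q)) (a i : ZMod q) :
    rotConj σ a i = σ (i - a) + a := by
  simp [rotConj, sub_eq_add_neg]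

lemma rotPerm_pow_mul_mul_inv (σ : Equiv.Perm (ZMod q)) (j : ℕ) :
    rotPerm q ^ j * σ * (rotPerm q ^ j)⁻¹ = rotConj σ j := by
  have hpow : rotPerm q ^ j = Equiv.addRight (j : ZMod q) := by
    induction j with
    | zero => ext; simp
    | succ j ih =>
      rw [pow_succ, ih]
      ext
      simp only [Equiv.Perm.mul_apply, rotPerm, Equiv.coe_addRight]
      push_cast
      ring
  rw [hpow, rotConj]

lemma rotConj_rotConj (σ : Equiv.Perm (ZMod q)) (a b : ZMod q) :
    rotConj (rotConj σ a) b = rotConj σ (a + b) := by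
  ext i
  simp only [rotConj_apply, sub_sub, add_assoc, add_comm b a]

lemma rotConj_zero (σ : Equiv.Perm (ZMod q)) : rotConj σ 0 = σ := by
  ext i
  simp [rotConj_apply]

lemma rotConj_eq_rotConj_iff (σ : Equiv.Perm (ZMod q)) (a b : ZMod q) :
    rotConj σ a = rotConj σ b ↔ rotConj σ (a - b) = σ := by
  constructor
  · intro h
    simpa [rotConj_rotConj, rotConj_zero, ← sub_eq_add_neg] using congrArg (rotConj · (-b)) h
  · intro h
    rw [← sub_add_cancel a b, ← rotConj_rotConj, h]

lemma rotConj_pow (σ : Equiv.Perm (ZMod q)) (a : ZMod q) (n : ℕ) :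
    rotConj σ a ^ n = rotConj (σ ^ n) a :=
  conj_pow

lemma IsQCycle.rotConj {σ : Equiv.Perm (ZMod q)} (hσ : IsQCycle q σ) (a : ZMod q) :
    IsQCycle q (rotConj σ a) := by
  intro i j
  obtain ⟨n, hn⟩ := hσ (i - a) (j - a)
  exact ⟨n, by rw [rotConj_pow, rotConj_apply, hn, sub_add_cancel]⟩

variable [NeZero q]

lemma desNum_rotConj (hq : 2 ≤ q) (σ : Equiv.Perm (ZMod q)) (a : ZMod q) :
    desNum q (rotConj σ a) = desNum q σ := by
  have hsum : ∑ i, (rep q (rotConj σ a (i + 1) - rotConj σ a i) : ℤ) =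
      ∑ i, (rep q (σ (i + 1) - σ i) : ℤ) := by
    simp only [rotConj_apply, add_sub_add_right_eq_sub]
    exact Fintype.sum_equiv (Equiv.subRight a) _ _ fun i => by simp [sub_add_eq_add_sub]
  rw [sum_rep_sub_eq_mul_desNum hq, sum_rep_sub_eq_mul_desNum hq] at hsum
  exact_mod_cast mul_left_cancel₀ (by positivity) hsum

lemma card_zero_mem_descents_rotConj (hq : 2 ≤ q) {σ : Equiv.Perm (ZMod q)}
    (hσ : ∀ i, σ i ≠ i) :
    #{a | 0 ∈ descents q (rotConj σ a)} = desNum q σ - 1 := by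
  have hcount : (q : ℤ) * #{i | rep q (σ (i + 1) - i) < rep q (σ i - i)} =
      q * desNum q σ - q := by
    have hne : ∀ i, σ i - i ≠ σ (i + 1) - i := fun i h =>
      apply_ne_apply_add_one hq σ i (sub_left_injective h)
    have hsucc : ∀ i, (rep q (σ (i + 1) - i) : ℤ) = rep q (σ (i + 1) - (i + 1)) + 1 := by
      intro i
      have := rep_add_one (sub_ne_zero.mpr (hσ (i + 1)))
      rw [sub_add_eq_add_sub, add_sub_add_right_eq_sub] at this
      exact_mod_cast this
    have hshift : ∑ i, (rep q (σ (i + 1) - (i + 1)) : ℤ) = ∑ i, (rep q (σ i - i) : ℤ) :=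
      Fintype.sum_equiv (Equiv.addRight 1) _ _ fun _ => rfl
    rw [natCast_mul_card_filter_rep_lt hne, ← sum_rep_sub_eq_mul_desNum hq]
    simp only [sub_sub_sub_cancel_right, hsucc, sum_add_distrib, sum_sub_distrib, hshift,
      sum_const, card_univ, ZMod.card, nsmul_eq_mul, mul_one]
    ring
  have hneg : #{a | 0 ∈ descents q (rotConj σ a)} =
      #{i | rep q (σ (i + 1) - i) < rep q (σ i - i)} := by
    refine card_equiv (Equiv.neg _) fun a => ?_
    simp [descents, rotConj_apply, sub_eq_add_neg, add_comm]
  have hq0 : (q : ℤ) ≠ 0 := by positivity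
  have : (#{a | 0 ∈ descents q (rotConj σ a)} : ℤ) = desNum q σ - 1 :=
    mul_left_cancel₀ hq0 (by rw [hneg, hcount]; ring)
  omega

end RotConj

section Counting

lemma card_filter_comp_eq_card_mul {α β : Type*} [Fintype α] [DecidableEq β] (f : α → β)
    (P : β → Prop) [DecidablePred P] {s : ℕ} (hs : ∀ a, #{b | f b = f a} = s) :
    #{a | P (f a)} = #{b ∈ univ.image f | P b} * s := by
  rw [card_eq_sum_card_image f, ← filter_image, ← smul_eq_mul, ← sum_const]
  refine sum_congr rfl fun b hb => ?_
  obtain ⟨hb, hP⟩ := mem_filter.mp hb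
  obtain ⟨a, -, rfl⟩ := mem_image.mp hb
  rw [← hs a, filter_filter]
  congr 1
  ext b
  simp only [mem_filter, mem_univ, true_and]
  exact ⟨fun h => h.2, fun h => ⟨h ▸ hP, h⟩⟩

variable {q : ℕ} [NeZero q]

lemma card_range_filter_natCast (P : ZMod q → Prop) [DecidablePred P] :
    #((range q).filter fun j : ℕ => P j) = #{a : ZMod q | P a} := by
  refine card_nbij' (fun j : ℕ => (j : ZMod q)) ZMod.val (fun j hj => ?_) (fun a ha => ?_)
    (fun j hj => ?_) (fun a _ => ZMod.natCast_zmod_val a)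
  · simpa using (mem_filter.mp hj).2
  · simpa [ZMod.val_lt a] using (mem_filter.mp ha).2
  · exact ZMod.val_cast_of_lt (mem_range.mp (mem_filter.mp hj).1)

lemma card_rotConj_eq_rotConj (σ : Equiv.Perm (ZMod q)) (a : ZMod q) :
    #{b | rotConj σ b = rotConj σ a} = symOrder q σ := by
  rw [symOrder]
  simp_rw [rotPerm_pow_mul_mul_inv]
  rw [card_range_filter_natCast (fun b => rotConj σ b = σ)]
  exact card_equiv (Equiv.subRight a) fun b => by simp [rotConj_eq_rotConj_iff]

end Counting

section Cycle

variable {q : ℕ} {σ : Equiv.Perm (ZMod q)}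

lemma IsQCycle.apply_ne (hq : 2 ≤ q) (hσ : IsQCycle q σ) (i : ZMod q) : σ i ≠ i := by
  have : Fact (1 < q) := ⟨hq⟩
  intro h
  obtain ⟨n, hn⟩ := hσ i (i + 1)
  rw [Equiv.Perm.pow_apply_eq_self_of_apply_eq_self h] at hn
  simp at hn

lemma IsQCycle.pow_eq_one [NeZero q] (hq : 2 ≤ q) (hσ : IsQCycle q σ) : σ ^ q = 1 := by
  have hcycle : σ.IsCycle :=
    ⟨0, hσ.apply_ne hq 0, fun j _ =>
      let ⟨n, hn⟩ := hσ 0 j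
      ⟨n, by rwa [zpow_natCast]⟩⟩
  have hsupp : σ.support = univ := eq_univ_of_forall fun i => by simpa using hσ.apply_ne hq i
  have horder : orderOf σ = q := by rw [hcycle.orderOf, hsupp, card_univ, ZMod.card]
  exact orderOf_dvd_iff_pow_eq_one.mp horder.dvd

lemma IsQCycle.forall_of_invariant (hσ : IsQCycle q σ) {P : ZMod q → Prop}
    (hP : ∀ i, P i → P (σ i)) {i : ZMod q} (hi : P i) (j : ZMod q) : P j := by
  obtain ⟨n, rfl⟩ := hσ i j
  induction n with
  | zero => exact hi
  | succ n ih => rw [pow_succ', Equiv.Perm.mul_apply]; exact hP _ ih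

end Cycle

section Digits

variable {q : ℕ} [NeZero q] {π : Equiv.Perm (ZMod q)}

def digit (q : ℕ) [NeZero q] (π : Equiv.Perm (ZMod q)) (i : ZMod q) : ℕ :=
  #{i' ∈ descents q π | rep q i' < rep q i}

lemma digit_mono {i j : ZMod q} (h : rep q i ≤ rep q j) : digit q π i ≤ digit q π j :=
  card_le_card (monotone_filter_right _ fun _ _ hi => hi.trans_le h)

lemma digit_one : digit q π 1 = 0 := by
  simp [digit, rep_one, Nat.pos_iff_ne_zero.mp (one_le_rep _)]

lemma digit_zero (h0 : 0 ∈ descents q π) : digit q π 0 = desNum q π - 1 := by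
  have : {i' ∈ descents q π | rep q i' < rep q 0} = (descents q π).erase 0 := by
    ext i
    simp only [mem_filter, mem_erase, rep_zero]
    exact ⟨fun h => ⟨fun h0 => by simp [h0, rep_zero] at h, h.1⟩,
      fun h => ⟨h.2, rep_lt_of_ne_zero h.1⟩⟩
  rw [digit, this, card_erase_of_mem h0, card_descents]

lemma digit_le (h0 : 0 ∈ descents q π) (i : ZMod q) : digit q π i ≤ desNum q π - 1 :=
  digit_zero h0 ▸ digit_mono (by rw [rep_zero]; exact rep_le i)

lemma digit_add_one {i : ZMod q} (hi : i ≠ 0) :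
    digit q π (i + 1) = digit q π i + if i ∈ descents q π then 1 else 0 := by
  have hsplit : {i' ∈ descents q π | rep q i' < rep q (i + 1)} =
      {i' ∈ descents q π | rep q i' < rep q i} ∪ {i' ∈ descents q π | i' = i} := by
    ext i'
    simp only [mem_union, mem_filter, rep_add_one hi, Nat.lt_succ_iff_lt_or_eq,
      rep_injective.eq_iff]
    tauto
  have hdisj : Disjoint {i' ∈ descents q π | rep q i' < rep q i} {i' ∈ descents q π | i' = i} :=
    disjoint_filter.mpr fun _ _ hlt heq => (heq ▸ hlt).false
  rw [digit, hsplit, card_union_of_disjoint hdisj, filter_eq', digit]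
  split_ifs <;> simp

lemma rep_apply_lt_rep_apply_add_one (hq : 2 ≤ q) {i : ZMod q} (hi : i ≠ 0)
    (h : digit q π (i + 1) = digit q π i) : rep q (π i) < rep q (π (i + 1)) := by
  have hnd : i ∉ descents q π := fun hD => by
    rw [digit_add_one hi, if_pos hD] at h
    omega
  simp only [descents, mem_filter, mem_univ, true_and, not_lt] at hnd
  exact hnd.lt_of_ne (rep_injective.ne (apply_ne_apply_add_one hq π i))

/-- Between two indices with the same digit there is no descent, so `π` preserves their order. -/
lemma rep_apply_lt_of_digit_eq (hq : 2 ≤ q) {i j : ZMod q} (hij : rep q i < rep q j)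
    (h : digit q π i = digit q π j) : rep q (π i) < rep q (π j) := by
  obtain ⟨n, hn⟩ : ∃ n, rep q j = rep q i + (n + 1) := ⟨rep q j - rep q i - 1, by omega⟩
  have hi : i ≠ 0 := fun h0 => by
    have := rep_le j
    rw [h0, rep_zero] at hij
    omega
  have hrep := rep_add_one hi
  induction n generalizing i with
  | zero =>
    obtain rfl : j = i + 1 := rep_injective (by omega)
    exact rep_apply_lt_rep_apply_add_one hq hi h.symm
  | succ n ih =>
    have hdigit : digit q π (i + 1) = digit q π i :=
      le_antisymm (h ▸ digit_mono (by omega)) (digit_mono (by omega))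
    have hi1 : i + 1 ≠ 0 := fun h0 => by
      have := rep_le j
      rw [h0, rep_zero] at hrep
      omega
    exact (rep_apply_lt_rep_apply_add_one hq hi hdigit).trans
      (ih (by omega) (hdigit.trans h) (by omega) hi1 (rep_add_one hi1))

end Digits

section OrbitPoint

variable {q d : ℕ}

lemma pow_sub_one_pos (hq : 2 ≤ q) (hd : 2 ≤ d) : (0 : ℝ) < (d : ℝ) ^ q - 1 := by
  have : (1 : ℝ) < (d : ℝ) ^ q := one_lt_pow₀ (by exact_mod_cast hd) (by omega)
  linarith

variable [NeZero q] {π : Equiv.Perm (ZMod q)}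

def digitValue (q d : ℕ) [NeZero q] (π : Equiv.Perm (ZMod q)) : ℕ → ZMod q → ℕ
  | 0, _ => 0
  | n + 1, i => digit q π i * d ^ n + digitValue q d π n (π i)

lemma digitValue_succ' (n : ℕ) (i : ZMod q) :
    digitValue q d π (n + 1) i = d * digitValue q d π n i + digit q π ((π ^ n) i) := by
  induction n generalizing i with
  | zero => simp [digitValue]
  | succ n ih =>
    rw [digitValue, ih, digitValue, pow_succ π, Equiv.Perm.mul_apply]
    ring

lemma digitValue_lt (hd : 1 ≤ d) (hdigit : ∀ j, digit q π j ≤ d - 1) (n : ℕ) (i : ZMod q) :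
    digitValue q d π n i < d ^ n := by
  induction n generalizing i with
  | zero => simp [digitValue]
  | succ n ih =>
    obtain ⟨e, rfl⟩ : ∃ e, d = e + 1 := ⟨d - 1, by omega⟩
    have hi : digit q π i ≤ e := by simpa using hdigit i
    rw [digitValue, pow_succ]
    nlinarith [Nat.mul_le_mul_right ((e + 1) ^ n) hi, ih (π i)]

/-- The point `∑ₖ digit (πᵏ i) / dᵏ⁺¹`, summed one period at a time. -/
def orbitPoint (q d : ℕ) [NeZero q] (π : Equiv.Perm (ZMod q)) (i : ZMod q) : ℝ :=
  digitValue q d π q i / ((d : ℝ) ^ q - 1)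

lemma mul_orbitPoint (hq : 2 ≤ q) (hd : 2 ≤ d) (hπ : π ^ q = 1) (i : ZMod q) :
    d * orbitPoint q d π i = orbitPoint q d π (π i) + digit q π i := by
  have hrec := digitValue_succ' (d := d) (π := π) q i
  rw [digitValue, hπ, Equiv.Perm.one_apply] at hrec
  have hD := pow_sub_one_pos hq hd
  rw [orbitPoint, orbitPoint]
  field_simp
  have : (digit q π i * d ^ q + digitValue q d π q (π i) : ℝ) =
      d * digitValue q d π q i + digit q π i := by exact_mod_cast hrec
  linear_combination -this

end OrbitPoint

section Existence

variable {q d : ℕ} [NeZero q] {π : Equiv.Perm (ZMod q)}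

lemma orbitPoint_mem_Icc (hq : 2 ≤ q) (hd : 2 ≤ d) (hdigit : ∀ j, digit q π j ≤ d - 1)
    (i : ZMod q) : orbitPoint q d π i ∈ Set.Icc 0 1 := by
  have hD := pow_sub_one_pos hq hd
  have hlt : ((digitValue q d π q i + 1 : ℕ) : ℝ) ≤ (d ^ q : ℕ) :=
    Nat.cast_le.mpr (digitValue_lt (by omega) hdigit q i)
  push_cast at hlt
  exact ⟨div_nonneg (Nat.cast_nonneg _) hD.le, (div_le_one hD).mpr (by linarith)⟩

lemma orbitPoint_mem_Ioo (hq : 2 ≤ q) (hd : 2 ≤ d) (hπ : IsQCycle q π)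
    (hdes : desNum q π = d) (h0 : 0 ∈ descents q π) (i : ZMod q) :
    orbitPoint q d π i ∈ Set.Ioo 0 1 := by
  have hdigit : ∀ j, (digit q π j : ℝ) + 1 ≤ d := fun j => by
    exact_mod_cast (by have := hdes ▸ digit_le h0 j; omega : digit q π j + 1 ≤ d)
  have hIcc := orbitPoint_mem_Icc hq hd fun j => hdes ▸ digit_le h0 j
  have hrec := mul_orbitPoint (d := d) hq hd (hπ.pow_eq_one hq)
  -- A point at `0` (resp. `1`) would drag the whole cycle there, against the digit at `0` (resp. `1`).
  refine ⟨(hIcc i).1.lt_of_ne' fun hi => ?_, (hIcc i).2.lt_of_ne fun hi => ?_⟩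
  · have hzero : ∀ j, orbitPoint q d π j = 0 := hπ.forall_of_invariant
      (fun j hj => le_antisymm
        (by linarith [hj ▸ hrec j, (digit q π j).cast_nonneg (α := ℝ)]) (hIcc (π j)).1) hi
    have h1 : (1 : ℝ) ≤ digit q π 0 := by
      rw [digit_zero h0, hdes]
      exact_mod_cast (by omega : 1 ≤ d - 1)
    linarith [hzero 0 ▸ hzero (π 0) ▸ hrec 0]
  · have hone : ∀ j, orbitPoint q d π j = 1 := hπ.forall_of_invariant
      (fun j hj => le_antisymm (hIcc (π j)).2 (by linarith [hj ▸ hrec j, hdigit j])) hi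
    have h2 : (2 : ℝ) ≤ d := by exact_mod_cast hd
    have h := hone 1 ▸ hone (π 1) ▸ hrec 1
    rw [digit_one, mul_one, Nat.cast_zero] at h
    linarith

lemma orbitPoint_lt_of_rep_lt (hq : 2 ≤ q) (hd : 2 ≤ d) (hπ : IsQCycle q π)
    (hdes : desNum q π = d) (h0 : 0 ∈ descents q π) {i j : ZMod q} (hij : rep q i < rep q j) :
    orbitPoint q d π i < orbitPoint q d π j := by
  have hIoo := orbitPoint_mem_Ioo hq hd hπ hdes h0
  have hrec := mul_orbitPoint (d := d) hq hd (hπ.pow_eq_one hq)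
  obtain ⟨n, hn⟩ := hπ i 0
  induction n generalizing i j with
  | zero =>
    rw [pow_zero, Equiv.Perm.one_apply] at hn
    have := rep_le j
    rw [hn, rep_zero] at hij
    omega
  | succ n ih =>
    have hn' : (π ^ n) (π i) = 0 := by rwa [← Equiv.Perm.mul_apply, ← pow_succ]
    suffices (d : ℝ) * orbitPoint q d π i < d * orbitPoint q d π j from
      lt_of_mul_lt_mul_left this (Nat.cast_nonneg d)
    rcases (digit_mono (π := π) hij.le).lt_or_eq with hlt | heq
    · have : (digit q π i : ℝ) + 1 ≤ digit q π j := by exact_mod_cast hlt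
      linarith [hrec i, hrec j, (hIoo (π i)).2, (hIoo (π j)).1]
    · have := ih (rep_apply_lt_of_digit_eq hq hij heq) hn'
      linarith [hrec i, hrec j, congrArg (Nat.cast (R := ℝ)) heq]

lemma mkRealization_orbitPoint (hq : 2 ≤ q) (hd : 2 ≤ d) (hπ : IsQCycle q π)
    (hdes : desNum q π = d) (h0 : 0 ∈ descents q π) :
    MkRealization q d π (orbitPoint q d π) :=
  ⟨orbitPoint_mem_Ioo hq hd hπ hdes h0, fun _ _ => orbitPoint_lt_of_rep_lt hq hd hπ hdes h0,
    fun i => ⟨digit q π i, by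
      simpa using mul_orbitPoint (d := d) hq hd (hπ.pow_eq_one hq) i⟩⟩

end Existence

section Uniqueness

lemma eq_ite_of_sum_eq_card {ι : Type*} [Fintype ι] [DecidableEq ι] {S : Finset ι}
    {w : ι → ℤ} (h0 : ∀ i, 0 ≤ w i) (h1 : ∀ i ∈ S, 1 ≤ w i) (hsum : ∑ i, w i = #S) (i : ι) :
    w i = if i ∈ S then 1 else 0 := by
  have hle : ∀ j, (if j ∈ S then 1 else 0 : ℤ) ≤ w j := fun j => by
    split_ifs with h
    exacts [h1 j h, h0 j]
  have hzero : ∑ j, (w j - if j ∈ S then 1 else 0) = 0 := by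
    rw [sum_sub_distrib, hsum, sum_boole]
    simp
  have := (sum_eq_zero_iff_of_nonneg fun j _ => sub_nonneg.mpr (hle j)).mp hzero i (mem_univ i)
  linarith

lemma eq_zero_of_forall_mul_eq_comp {ι : Type*} [Finite ι] {f : ι → ι} {c : ℝ} (hc : 1 < c)
    {e : ι → ℝ} (he : ∀ i, c * e i = e (f i)) : e = 0 := by
  cases isEmpty_or_nonempty ι
  · exact Subsingleton.elim _ _
  obtain ⟨i, hi⟩ := Finite.exists_max fun i => |e i|
  have hmax : c * |e i| ≤ |e i| := by
    rw [← abs_of_pos (by linarith : 0 < c), ← abs_mul, he]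
    exact hi _
  have hi0 : |e i| ≤ 0 := by nlinarith [abs_nonneg (e i)]
  funext j
  exact abs_nonpos_iff.mp ((hi j).trans hi0)

variable {q d : ℕ} [NeZero q] {π π' : Equiv.Perm (ZMod q)} {F : ℝ → ℝ} {x : ZMod q → ℝ}

lemma IsRealization.injective (hx : IsRealization q π F x) : Function.Injective x := by
  intro a b hab
  by_contra hne
  rcases lt_or_gt_of_ne (rep_injective.ne hne) with h | h
  · exact (hx.2.1 a b h).ne hab
  · exact (hx.2.1 b a h).ne hab.symm

lemma IsRealization.perm_eq (hx : IsRealization q π F x) (hx' : IsRealization q π' F x) :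
    π = π' := by
  ext i
  obtain ⟨a, ha⟩ := hx.2.2 i
  obtain ⟨b, hb⟩ := hx'.2.2 i
  have h1 := hx.1 (π i)
  have h2 := hx.1 (π' i)
  have hlt : ((b - a : ℤ) : ℝ) < 1 := by push_cast; linarith [h1.2, h2.1]
  have hgt : (-1 : ℝ) < ((b - a : ℤ) : ℝ) := by push_cast; linarith [h1.1, h2.2]
  have hab : a = b := by
    have : b - a < 1 := by exact_mod_cast hlt
    have : -1 < b - a := by exact_mod_cast hgt
    omega
  subst hab
  exact hx.injective (show x (π i) = x (π' i) by linarith)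

lemma MkRealization.digit_bounds (hx : MkRealization q d π x) {m : ZMod q → ℤ}
    (hm : ∀ i, (d : ℝ) * x i = x (π i) + m i) (i : ZMod q) : 0 ≤ m i ∧ m i < d := by
  have hi := hx.1 i
  have hπi := hx.1 (π i)
  have hlow := mul_nonneg (Nat.cast_nonneg (α := ℝ) d) hi.1.le
  have hup := mul_le_of_le_one_right (Nat.cast_nonneg (α := ℝ) d) hi.2.le
  have h1 : ((-1 : ℤ) : ℝ) < m i := by push_cast; linarith [hm i, hπi.2]
  have h2 : (m i : ℝ) < (d : ℤ) := by push_cast; linarith [hm i, hπi.1]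
  exact ⟨by have := Int.cast_lt.mp h1; omega, Int.cast_lt.mp h2⟩

/-- `m (i + 1) - m i`, plus `d` at the wrap-around `i = 0`, is `d` times the gap from `xᵢ` to
`xᵢ₊₁` minus the signed gap between their images. -/
lemma MkRealization.descent_weight (hx : MkRealization q d π x) {m : ZMod q → ℤ}
    (hm : ∀ i, (d : ℝ) * x i = x (π i) + m i) (i : ZMod q) :
    0 ≤ m (i + 1) - m i + (if i = 0 then (d : ℤ) else 0) ∧
      (i ∈ descents q π → 1 ≤ m (i + 1) - m i + (if i = 0 then (d : ℤ) else 0)) := by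
  obtain ⟨hmem, hmono, -⟩ := hx
  have hgap : 0 < x (i + 1) + (if i = 0 then 1 else 0) - x i := by
    split_ifs with h
    · linarith [(hmem (i + 1)).1, (hmem i).2]
    · linarith [hmono i (i + 1) (by rw [rep_add_one h]; omega)]
  have hw : ((m (i + 1) - m i + (if i = 0 then (d : ℤ) else 0) : ℤ) : ℝ) =
      d * (x (i + 1) + (if i = 0 then 1 else 0) - x i) - (x (π (i + 1)) - x (π i)) := by
    split_ifs <;> push_cast <;> linear_combination hm i - hm (i + 1)
  have hΔ : x (π (i + 1)) - x (π i) < 1 := by linarith [(hmem (π (i + 1))).2, (hmem (π i)).1]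
  have hdgap : 0 ≤ (d : ℝ) * (x (i + 1) + (if i = 0 then 1 else 0) - x i) := by positivity
  constructor
  · have : ((-1 : ℤ) : ℝ) < ((m (i + 1) - m i + (if i = 0 then (d : ℤ) else 0) : ℤ) : ℝ) := by
      rw [hw]; push_cast; linarith
    have := Int.cast_lt.mp this
    omega
  · intro hi
    have hdesc : x (π (i + 1)) < x (π i) := hmono _ _ (mem_filter.mp hi).2
    have : ((0 : ℤ) : ℝ) < ((m (i + 1) - m i + (if i = 0 then (d : ℤ) else 0) : ℤ) : ℝ) := by
      rw [hw]; push_cast; linarith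
    have := Int.cast_lt.mp this
    omega

lemma MkRealization.digits_eq (hdes : desNum q π = d) (hx : MkRealization q d π x)
    {m : ZMod q → ℤ} (hm : ∀ i, (d : ℝ) * x i = x (π i) + m i) :
    0 ∈ descents q π ∧ ∀ i, m i = digit q π i := by
  have hb := hx.digit_bounds hm
  have hw := hx.descent_weight hm
  have hsum : ∑ i, (m (i + 1) - m i + if i = 0 then (d : ℤ) else 0) = #(descents q π) := by
    have hshift : ∑ i, m (i + 1) = ∑ i, m i :=
      Fintype.sum_equiv (Equiv.addRight 1) _ _ fun _ => rfl
    rw [sum_add_distrib, sum_sub_distrib, hshift, sub_self, zero_add, sum_ite_eq',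
      if_pos (mem_univ _), card_descents, hdes]
  have hind := eq_ite_of_sum_eq_card (fun i => (hw i).1) (fun i hi => (hw i).2 hi) hsum
  have h0 : 0 ∈ descents q π := by
    by_contra h
    have := hind 0
    rw [if_neg h, if_pos rfl, zero_add] at this
    linarith [(hb 0).2, (hb 1).1]
  refine ⟨h0, rep_induction ?_ fun i hi ih => ?_⟩
  · have := hind 0
    rw [if_pos rfl, if_pos h0, zero_add] at this
    rw [digit_one, Nat.cast_zero]
    linarith [(hb 0).2, (hb 1).1]
  · have := hind i
    rw [if_neg hi, add_zero] at this
    rw [digit_add_one hi]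
    push_cast
    split_ifs at this ⊢ <;> omega

lemma MkRealization.eq_orbitPoint (hq : 2 ≤ q) (hd : 2 ≤ d) (hπ : IsQCycle q π)
    (hdes : desNum q π = d) (hx : MkRealization q d π x) :
    0 ∈ descents q π ∧ x = orbitPoint q d π := by
  choose m hm using hx.2.2
  beta_reduce at hm
  obtain ⟨h0, hdigit⟩ := hx.digits_eq hdes hm
  refine ⟨h0, sub_eq_zero.mp (eq_zero_of_forall_mul_eq_comp (f := π) (c := d)
    (by exact_mod_cast hd) fun i => ?_)⟩
  rw [Pi.sub_apply, Pi.sub_apply, mul_sub, hm i, mul_orbitPoint hq hd (hπ.pow_eq_one hq) i,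
    hdigit i]
  push_cast
  ring

lemma mkRealization_iff (hq : 2 ≤ q) (hd : 2 ≤ d) (hπ : IsQCycle q π) (hdes : desNum q π = d) :
    MkRealization q d π x ↔ 0 ∈ descents q π ∧ x = orbitPoint q d π :=
  ⟨MkRealization.eq_orbitPoint hq hd hπ hdes,
    fun ⟨h0, hx⟩ => hx ▸ mkRealization_orbitPoint hq hd hπ hdes h0⟩

end Uniqueness

theorem type_realization_count_minimal_general (q d s : ℕ) [NeZero q]
    (σ : Equiv.Perm (ZMod q)) (hσ : IsQCycle q σ) (hd : desNum q σ = d)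
    (hd2 : 2 ≤ d) (hs : symOrder q σ = s) :
    {x : ZMod q → ℝ | ∃ j : ℕ,
      MkRealization q d (rotPerm q ^ j * σ * (rotPerm q ^ j)⁻¹) x}.ncard * s
      = d - 1 := by
  have hq : 2 ≤ q := hd2.trans (hd ▸ desNum_le σ)
  have hreal : ∀ a x, MkRealization q d (rotConj σ a) x ↔
      0 ∈ descents q (rotConj σ a) ∧ x = orbitPoint q d (rotConj σ a) := fun a x =>
    mkRealization_iff hq hd2 (hσ.rotConj a) (by rw [desNum_rotConj hq, hd])
  set T := {π ∈ univ.image (rotConj σ) | 0 ∈ descents q π}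
  have hset : {x : ZMod q → ℝ | ∃ j : ℕ,
      MkRealization q d (rotPerm q ^ j * σ * (rotPerm q ^ j)⁻¹) x} = orbitPoint q d '' T := by
    ext x
    simp only [rotPerm_pow_mul_mul_inv, Set.mem_ofPred_eq, Set.mem_image, T, mem_coe, mem_filter,
      mem_image, mem_univ, true_and]
    constructor
    · rintro ⟨j, hx⟩
      obtain ⟨h0, rfl⟩ := (hreal j x).mp hx
      exact ⟨_, ⟨⟨j, rfl⟩, h0⟩, rfl⟩
    · rintro ⟨_, ⟨⟨a, rfl⟩, h0⟩, rfl⟩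
      exact ⟨a.val, by rw [ZMod.natCast_zmod_val]; exact (hreal a _).mpr ⟨h0, rfl⟩⟩
  have hinj : Set.InjOn (orbitPoint q d) T := by
    rintro _ hπ _ hπ' heq
    simp only [T, mem_coe, mem_filter, mem_image, mem_univ, true_and] at hπ hπ'
    obtain ⟨⟨a, rfl⟩, h0⟩ := hπ
    obtain ⟨⟨b, rfl⟩, h0'⟩ := hπ'
    exact ((hreal a _).mpr ⟨h0, heq.symm⟩).perm_eq ((hreal b _).mpr ⟨h0', rfl⟩)
  rw [hset, hinj.ncard_image, Set.ncard_coe_finset, ← hd,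
    ← card_zero_mem_descents_rotConj hq (hσ.apply_ne hq),
    card_filter_comp_eq_card_mul (rotConj σ) (fun π => 0 ∈ descents q π)
      fun a => (card_rotConj_eq_rotConj σ a).trans hs]

/-- A combinatorial type `τ = [σ]` in `𝒞_q` with `des τ = d ≥ 2` and
`sym τ = s` has exactly `(d-1)/s` realizations under `m_d` (stated as:
`s` times the number of realizations equals `d - 1`). -/
theorem type_realization_count_minimal (q d s : ℕ) [NeZero q] (hq : 2 ≤ q)
    (σ : Equiv.Perm (ZMod q)) (hσ : IsQCycle q σ) (hd : desNum q σ = d)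
    (hd2 : 2 ≤ d) (hs : symOrder q σ = s) :
    {x : ZMod q → ℝ | ∃ j : ℕ,
      MkRealization q d (rotPerm q ^ j * σ * (rotPerm q ^ j)⁻¹) x}.ncard * s
      = d - 1 :=
  type_realization_count_minimal_general q d s σ hσ hd hd2 hs
end
end

section
/- For every q-cycle σ ∈ 𝒞_q with des(σ) = d ≥ 2, the symmetry order sym(σ) divides d − 1. -/
open scoped Classical

noncomputable section

namespace AuxSym

variable {q : ℕ} [NeZero q]

/-- the gap `δ i` -/
def dlt (q : ℕ) [NeZero q] (σ : Equiv.Perm (ZMod q)) (i : ZMod q) : ℕ := (σ (i + 1) - σ i).val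

/-- `a i = (i - σ i).val` -/
def aa (q : ℕ) [NeZero q] (σ : Equiv.Perm (ZMod q)) (i : ZMod q) : ℕ := (i - σ i).val

lemma val_int_eq (z : ZMod q) (n : ℤ) (h0 : 0 ≤ n) (h1 : n < q) (h2 : (n : ZMod q) = z) :
    (z.val : ℤ) = n := by
  lift n to ℕ using h0
  have h3 : ((n : ℕ) : ZMod q) = z := by exact_mod_cast h2
  subst h3
  rw [ZMod.val_cast_of_lt (by exact_mod_cast h1)]

lemma cast_val (a : ZMod q) : ((a.val : ℕ) : ZMod q) = a :=
  (ZMod.natCast_val a).trans (ZMod.cast_id _ _)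

lemma no_fixed (hq : 2 ≤ q) {σ : Equiv.Perm (ZMod q)} (hσ : IsQCycle q σ) (i : ZMod q) :
    σ i ≠ i := by
  intro h
  obtain ⟨n, hn⟩ := hσ i (i + 1)
  have hfix : ∀ m : ℕ, (σ ^ m) i = i := by
    intro m
    induction m with
    | zero => rfl
    | succ m ih => rw [pow_succ, Equiv.Perm.mul_apply, h, ih]
  rw [hfix] at hn
  haveI : Fact (1 < q) := ⟨hq⟩
  exact one_ne_zero (add_left_cancel ((add_zero i).trans hn)).symm

lemma one_ne_zero' (hq : 2 ≤ q) : (1 : ZMod q) ≠ 0 := by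
  haveI : Fact (1 < q) := ⟨hq⟩
  exact one_ne_zero

lemma val_pos {z : ZMod q} (hz : z ≠ 0) : 1 ≤ z.val :=
  Nat.one_le_iff_ne_zero.mpr (fun h => hz (by rwa [ZMod.val_eq_zero] at h))

lemma aa_sub (hq : 2 ≤ q) {σ : Equiv.Perm (ZMod q)} (hσ : IsQCycle q σ) (i : ZMod q) :
    i - σ i ≠ 0 := sub_ne_zero.mpr (fun h => no_fixed hq hσ i h.symm)

lemma dlt_sub (hq : 2 ≤ q) (σ : Equiv.Perm (ZMod q)) (i : ZMod q) :
    σ (i + 1) - σ i ≠ 0 := by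
  refine sub_ne_zero.mpr (fun h => ?_)
  have h2 := σ.injective h
  exact one_ne_zero' hq (add_left_cancel (h2.trans (add_zero i).symm))

lemma rep_cast (x : ZMod q) : ((rep q x : ℕ) : ZMod q) = x := by
  unfold rep
  split
  · rename_i h; rw [h, ZMod.natCast_self]
  · exact cast_val x

lemma rep_pos (x : ZMod q) : 1 ≤ rep q x := by
  unfold rep
  split
  · have := NeZero.pos q; omega
  · exact val_pos (by assumption)

lemma rep_le (x : ZMod q) : rep q x ≤ q := by
  unfold rep
  split
  · exact le_refl q
  · exact (ZMod.val_lt x).le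

lemma rep_inj {x y : ZMod q} (h : rep q x = rep q y) : x = y := by
  unfold rep at h
  by_cases hx : x = 0 <;> by_cases hy : y = 0
  · rw [hx, hy]
  · rw [if_pos hx, if_neg hy] at h
    have := ZMod.val_lt y; omega
  · rw [if_neg hx, if_pos hy] at h
    have := ZMod.val_lt x; omega
  · rw [if_neg hx, if_neg hy] at h
    exact ZMod.val_injective q h

/-- The key telescoping step. -/
lemma step (hq : 2 ≤ q) {σ : Equiv.Perm (ZMod q)} (hσ : IsQCycle q σ) (i : ZMod q) :
    (aa q σ (i + 1) : ℤ) =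
      (aa q σ i : ℤ) + 1 - dlt q σ i +
        q * (if aa q σ i < dlt q σ i then 1 else 0) := by
  have hA1 : (1 : ℤ) ≤ (aa q σ i : ℤ) := by exact_mod_cast val_pos (aa_sub hq hσ i)
  have hA2 : ((aa q σ i : ℤ)) < q := by exact_mod_cast ZMod.val_lt _
  have hD1 : (1 : ℤ) ≤ (dlt q σ i : ℤ) := by exact_mod_cast val_pos (dlt_sub hq σ i)
  have hD2 : ((dlt q σ i : ℤ)) < q := by exact_mod_cast ZMod.val_lt _
  have hcast : ∀ ε : ℤ, (((aa q σ i : ℤ) + 1 - dlt q σ i + q * ε : ℤ) : ZMod q)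
      = (i + 1) - σ (i + 1) := by
    intro ε
    have e1 : ((aa q σ i : ℕ) : ZMod q) = i - σ i := cast_val _
    have e2 : ((dlt q σ i : ℕ) : ZMod q) = σ (i + 1) - σ i := cast_val _
    push_cast
    rw [e1, e2, ZMod.natCast_self]
    ring
  by_cases hc : aa q σ i < dlt q σ i
  · rw [if_pos hc]
    have hAD : (aa q σ i : ℤ) < dlt q σ i := by exact_mod_cast hc
    have hne : (aa q σ i : ℤ) + 1 - dlt q σ i + q * 1 ≠ q := by
      intro h
      have h0 : (((aa q σ i : ℤ) + 1 - dlt q σ i + q * 1 : ℤ) : ZMod q) = ((q : ℤ) : ZMod q) := by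
        rw [h]
      rw [hcast 1] at h0
      have : (i + 1) - σ (i + 1) = 0 := by
        rw [h0]; push_cast; exact ZMod.natCast_self q
      exact aa_sub hq hσ (i + 1) this
    exact val_int_eq _ _ (by omega) (lt_of_le_of_ne (by omega) hne) (hcast 1)
  · rw [if_neg hc]
    have hAD : (dlt q σ i : ℤ) ≤ aa q σ i := by exact_mod_cast Nat.le_of_not_lt hc
    exact val_int_eq _ _ (by simp only [mul_zero, add_zero]; omega)
      (by simp only [mul_zero, add_zero]; omega) (hcast 0)

/-- The gap in terms of representatives and descent. -/
lemma dlt_rep (hq : 2 ≤ q) (σ : Equiv.Perm (ZMod q)) (i : ZMod q) :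
    (dlt q σ i : ℤ) = (rep q (σ (i + 1)) : ℤ) - rep q (σ i) +
      q * (if rep q (σ (i + 1)) < rep q (σ i) then 1 else 0) := by
  have hne : σ (i + 1) ≠ σ i := fun h => dlt_sub hq σ i (sub_eq_zero.mpr h)
  have hrne : rep q (σ (i + 1)) ≠ rep q (σ i) := fun h => hne (rep_inj h)
  have h11 := rep_pos (σ (i + 1)); have h12 := rep_le (σ (i + 1))
  have h01 := rep_pos (σ i); have h02 := rep_le (σ i)
  have hcast : ∀ ε : ℤ, (((rep q (σ (i+1)) : ℤ) - rep q (σ i) + q * ε : ℤ) : ZMod q)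
      = σ (i + 1) - σ i := by
    intro ε
    have e1 := rep_cast (q := q) (σ (i + 1))
    have e2 := rep_cast (q := q) (σ i)
    push_cast
    rw [e1, e2, ZMod.natCast_self]
    ring
  by_cases hc : rep q (σ (i + 1)) < rep q (σ i)
  · rw [if_pos hc]
    have h := hcast 1
    exact val_int_eq _ _ (by push_cast; omega) (by push_cast; omega) h
  · rw [if_neg hc]
    exact val_int_eq _ _ (by simp only [mul_zero, add_zero]; push_cast; omega)
      (by simp only [mul_zero, add_zero]; push_cast; omega) (hcast 0)

lemma sum_shift (f : ZMod q → ℤ) : ∑ i : ZMod q, f (i + 1) = ∑ i : ZMod q, f i :=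
  Fintype.sum_equiv (Equiv.addRight (1 : ZMod q)) _ _ (fun _ => rfl)

/-- The number of marked indices equals `d - 1`. -/
lemma card_marked (hq : 2 ≤ q) {σ : Equiv.Perm (ZMod q)} (hσ : IsQCycle q σ) :
    ((Finset.univ.filter fun i : ZMod q => aa q σ i < dlt q σ i).card : ℤ) + 1
      = desNum q σ := by
  have h1 : ∑ i : ZMod q, (aa q σ (i + 1) : ℤ) = ∑ i : ZMod q, (aa q σ i : ℤ) :=
    sum_shift (fun i => (aa q σ i : ℤ))
  have h2 : ∑ i : ZMod q, ((aa q σ i : ℤ) + 1 - dlt q σ i +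
      q * (if aa q σ i < dlt q σ i then 1 else 0)) = ∑ i : ZMod q, (aa q σ i : ℤ) := by
    rw [← h1]
    exact (Finset.sum_congr rfl (fun i _ => (step hq hσ i).symm))
  have hexp : ∀ (g h : ZMod q → ℤ) (e : ZMod q → ℤ),
      ∑ i : ZMod q, (g i + 1 - h i + (q : ℤ) * e i)
        = (∑ i : ZMod q, g i) + q - (∑ i : ZMod q, h i) + q * ∑ i : ZMod q, e i := by
    intro g h e
    rw [Finset.sum_add_distrib, Finset.sum_sub_distrib, Finset.sum_add_distrib,
      Finset.sum_const, ← Finset.mul_sum]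
    simp [ZMod.card]
  rw [hexp] at h2
  have hM : ∑ i : ZMod q, (if aa q σ i < dlt q σ i then (1:ℤ) else 0)
      = ((Finset.univ.filter fun i : ZMod q => aa q σ i < dlt q σ i).card : ℤ) := by
    simp [Finset.sum_boole]
  rw [hM] at h2
  -- second identity : sum of dlt = q * desNum
  have h3 : ∑ i : ZMod q, (dlt q σ i : ℤ) = (q : ℤ) * desNum q σ := by
    have hrw : ∑ i : ZMod q, (dlt q σ i : ℤ)
        = ∑ i : ZMod q, ((rep q (σ (i + 1)) : ℤ) - rep q (σ i) +
            q * (if rep q (σ (i + 1)) < rep q (σ i) then 1 else 0)) :=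
      Finset.sum_congr rfl (fun i _ => dlt_rep hq σ i)
    rw [hrw, Finset.sum_add_distrib, Finset.sum_sub_distrib, ← Finset.mul_sum]
    have hsh : ∑ i : ZMod q, ((rep q (σ (i + 1)) : ℤ)) = ∑ i : ZMod q, (rep q (σ i) : ℤ) :=
      sum_shift (fun i => (rep q (σ i) : ℤ))
    rw [hsh]
    have hd : ∑ i : ZMod q, (if rep q (σ (i + 1)) < rep q (σ i) then (1:ℤ) else 0)
        = (desNum q σ : ℤ) := by
      simp [desNum, Finset.sum_boole]
    rw [hd]
    ring
  have hq0 : (q : ℤ) ≠ 0 := by positivity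
  have := h2
  rw [h3] at this
  -- this : Σ aa + q - q * d + q * M = Σ aa
  have hfin : (q : ℤ) * (((Finset.univ.filter fun i : ZMod q =>
      aa q σ i < dlt q σ i).card : ℤ) + 1) = q * desNum q σ := by linarith
  exact mul_left_cancel₀ hq0 hfin

end AuxSym
/-- For every `q`-cycle `σ` with `des σ = d ≥ 2`, the symmetry order `sym σ`
divides `d - 1`. -/
theorem symOrder_dvd_descent_sub_one (q : ℕ) [NeZero q] (hq : 2 ≤ q)
    (σ : Equiv.Perm (ZMod q)) (hσ : IsQCycle q σ) (hd : 2 ≤ desNum q σ) :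
    symOrder q σ ∣ desNum q σ - 1 := by
  classical
  set Mk : Finset (ZMod q) := Finset.univ.filter (fun i : ZMod q => AuxSym.aa q σ i < AuxSym.dlt q σ i)
    with hMk
  have hcard : (Mk.card : ℤ) + 1 = desNum q σ := by
    rw [hMk]; exact AuxSym.card_marked hq hσ
  set H : AddSubgroup (ZMod q) :=
    { carrier := {c | ∀ i, σ (i + c) = σ i + c}
      zero_mem' := by intro i; simp
      add_mem' := by
        intro c d hc hd i
        rw [← add_assoc, hd, hc, add_assoc]
      neg_mem' := by
        intro c hc i
        have h2 := hc (i + -c)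
        rw [neg_add_cancel_right] at h2
        rw [h2, add_neg_cancel_right] } with hH
  have hHmem : ∀ c : ZMod q, c ∈ H ↔ ∀ i, σ (i + c) = σ i + c := fun c => Iff.rfl
  set HF : Finset (ZMod q) := Finset.univ.filter (fun c => ∀ i, σ (i + c) = σ i + c) with hHF
  have hrot : ∀ j : ℕ, rotPerm q ^ j = Equiv.addRight ((j : ZMod q)) := by
    intro j
    induction j with
    | zero => ext x; simp [rotPerm]
    | succ n ih =>
      ext x
      rw [pow_succ]
      simp [ih, rotPerm]
      push_cast
      ring
  have hinv : ∀ c : ZMod q, (Equiv.addRight c)⁻¹ = Equiv.addRight (-c) := by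
    intro c; ext x; simp [Equiv.Perm.inv_def]
  have hcond : ∀ c : ZMod q,
      (Equiv.addRight c * σ * (Equiv.addRight c)⁻¹ = σ) ↔ ∀ i, σ (i + c) = σ i + c := by
    intro c
    rw [hinv]
    constructor
    · intro h i
      have h2 := congrArg (fun e : Equiv.Perm (ZMod q) => e (i + c)) h
      simp only [Equiv.Perm.mul_apply, Equiv.coe_addRight] at h2
      rw [add_neg_cancel_right] at h2
      exact h2.symm
    · intro h
      ext x
      simp only [Equiv.Perm.mul_apply, Equiv.coe_addRight]
      have h2 := h (x + -c)
      rw [neg_add_cancel_right] at h2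
      exact h2.symm
  have hsym : symOrder q σ = HF.card := by
    unfold symOrder
    rw [hHF]
    apply Finset.card_bij (fun (j : ℕ) _ => ((j : ZMod q)))
    · intro j hj
      simp only [Finset.mem_filter, Finset.mem_range] at hj
      simp only [Finset.mem_filter, Finset.mem_univ, true_and]
      rw [hrot j, hcond] at hj
      exact hj.2
    · intro j1 h1 j2 h2 hedge
      simp only [Finset.mem_filter, Finset.mem_range] at h1 h2
      have := congrArg ZMod.val hedge
      rwa [ZMod.val_cast_of_lt h1.1, ZMod.val_cast_of_lt h2.1] at this
    · intro c hc
      simp only [Finset.mem_filter, Finset.mem_univ, true_and] at hc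
      refine ⟨c.val, ?_, AuxSym.cast_val c⟩
      simp only [Finset.mem_filter, Finset.mem_range]
      refine ⟨ZMod.val_lt c, ?_⟩
      rw [hrot, hcond, AuxSym.cast_val]
      exact hc
  have hinvMk : ∀ c ∈ HF, ∀ i ∈ Mk, i + c ∈ Mk := by
    intro c hc i hi
    simp only [hHF, Finset.mem_filter, Finset.mem_univ, true_and] at hc
    simp only [hMk, Finset.mem_filter, Finset.mem_univ, true_and] at hi ⊢
    have ha : AuxSym.aa q σ (i + c) = AuxSym.aa q σ i := by
      unfold AuxSym.aa
      rw [hc i]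
      congr 1
      ring
    have hdl : AuxSym.dlt q σ (i + c) = AuxSym.dlt q σ i := by
      unfold AuxSym.dlt
      rw [show i + c + 1 = (i + 1) + c by ring, hc (i + 1), hc i]
      congr 1
      ring
    rw [ha, hdl]
    exact hi
  have hdvd : HF.card ∣ Mk.card := by
    haveI : Fintype (ZMod q ⧸ H) := Fintype.ofFinite _
    have hfib := Finset.card_eq_sum_card_fiberwise
      (f := fun i : ZMod q => (QuotientAddGroup.mk i : ZMod q ⧸ H)) (s := Mk)
      (t := Finset.univ) (fun x _ => Finset.mem_univ _)
    rw [hfib]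
    refine Finset.dvd_sum ?_
    intro cl _
    rcases Finset.eq_empty_or_nonempty
        (Mk.filter fun i => (QuotientAddGroup.mk i : ZMod q ⧸ H) = cl) with he | ⟨a, ha⟩
    · rw [he, Finset.card_empty]
      exact dvd_zero _
    · have haMk : a ∈ Mk := (Finset.mem_filter.mp ha).1
      have hacl : (QuotientAddGroup.mk a : ZMod q ⧸ H) = cl := (Finset.mem_filter.mp ha).2
      have hcc : (Mk.filter fun i => (QuotientAddGroup.mk i : ZMod q ⧸ H) = cl).card
          = HF.card := by
        apply Finset.card_bij (fun (i : ZMod q) _ => i - a)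
        · intro i hi
          simp only [Finset.mem_filter] at hi
          simp only [hHF, Finset.mem_filter, Finset.mem_univ, true_and]
          have heq : (QuotientAddGroup.mk i : ZMod q ⧸ H) = QuotientAddGroup.mk a :=
            hi.2.trans hacl.symm
          rw [QuotientAddGroup.eq] at heq
          have hmem : i - a ∈ H := by
            have := H.neg_mem heq
            rwa [neg_add_rev, neg_neg, ← sub_eq_neg_add] at this
          exact (hHmem _).mp hmem
        · intro i1 h1 i2 h2 hedge
          exact sub_left_inj.mp hedge
        · intro c hc
          refine ⟨a + c, ?_, by rw [add_sub_cancel_left]⟩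
          simp only [Finset.mem_filter]
          refine ⟨hinvMk c hc a haMk, ?_⟩
          have hcH : c ∈ H := by
            simp only [hHF, Finset.mem_filter, Finset.mem_univ, true_and] at hc
            exact (hHmem c).mpr hc
          have : (QuotientAddGroup.mk (a + c) : ZMod q ⧸ H) = QuotientAddGroup.mk a := by
            rw [QuotientAddGroup.eq]
            have : -(a + c) + a = -c := by ring
            rw [this]
            exact H.neg_mem hcH
          exact this.trans hacl
      rw [hcc]
  rw [hsym]
  have hfin : Mk.card = desNum q σ - 1 := by omega
  rw [← hfin]
  exact hdvd
end
end
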